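/- arXiv:2007.04837 — 7 statements merged into one kernel-verified Lean document; each statement's English description precedes it below -/
import Mathlib

section
/- Let π be a positive probability vector in ℝ^n. For every x ∈ ℝ^n with Σ_i π_i x_i = 0 (i.e., x orthogonal to 𝟙 under <·,·>_π), one has N(x) ≥ √2 · ‖x‖_π, where N(x) = max_i x_i − min_i x_i and ‖x‖_π² = Σ_i π_i x_i². -/
open Finset

theorem seminorm_ge_sqrt2_norm {n : ℕ} (hn : 0 < n) (π x : Fin n → ℝ)
    (hπpos : ∀ i, 0 < π i) (hπsum : ∑ i, π i = 1)
    (hx : ∑ i, π i * x i = 0) :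
    Finset.univ.sup' ⟨⟨0, hn⟩, Finset.mem_univ _⟩ x
        - Finset.univ.inf' ⟨⟨0, hn⟩, Finset.mem_univ _⟩ x
      ≥ Real.sqrt 2 * Real.sqrt (∑ i, π i * x i ^ 2) := by
  set ne : (Finset.univ : Finset (Fin n)).Nonempty := ⟨⟨0, hn⟩, Finset.mem_univ _⟩
  set M := Finset.univ.sup' ne x with hM
  set m := Finset.univ.inf' ne x with hm
  have hMx : ∀ i, x i ≤ M := fun i => Finset.le_sup' x (Finset.mem_univ i)
  have hmx : ∀ i, m ≤ x i := fun i => Finset.inf'_le x (Finset.mem_univ i)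
  have hkey : ∑ i, π i * x i ^ 2 ≤ -(M * m) := by
    have h1 : ∑ i, π i * x i ^ 2 ≤ ∑ i, π i * ((M + m) * x i - M * m) := by
      apply Finset.sum_le_sum
      intro i _
      have h2 : 0 ≤ (M - x i) * (x i - m) :=
        mul_nonneg (by linarith [hMx i]) (by linarith [hmx i])
      have : x i ^ 2 ≤ (M + m) * x i - M * m := by nlinarith
      exact mul_le_mul_of_nonneg_left this (hπpos i).le
    have h3 : ∑ i, π i * ((M + m) * x i - M * m)
        = (M + m) * (∑ i, π i * x i) - M * m * (∑ i, π i) := by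
      rw [Finset.mul_sum, Finset.mul_sum, ← Finset.sum_sub_distrib]
      apply Finset.sum_congr rfl
      intro i _
      ring
    rw [h3, hx, hπsum] at h1
    linarith
  have hsq : 2 * ∑ i, π i * x i ^ 2 ≤ (M - m) ^ 2 := by nlinarith [sq_nonneg M, sq_nonneg m, hkey]
  have hMm : 0 ≤ M - m := by linarith [hMx ⟨0, hn⟩, hmx ⟨0, hn⟩]
  calc Real.sqrt 2 * Real.sqrt (∑ i, π i * x i ^ 2)
      = Real.sqrt (2 * ∑ i, π i * x i ^ 2) := (Real.sqrt_mul (by norm_num) _).symm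
    _ ≤ Real.sqrt ((M - m) ^ 2) := Real.sqrt_le_sqrt hsq
    _ = |M - m| := Real.sqrt_sq_eq_abs _
    _ = M - m := abs_of_nonneg hMm
end

section
/- Let P be a reversible stochastic matrix with Perron vector π, and define μ(P) = min over nonempty proper subsets S ⊊ [n] of Σ_{i∈S} Σ_{j∉S} π_i P_{ij}. Then for every x ∈ ℝ^n, Q_P(x) = <x, x − Px>_π ≥ (μ(P)/(n−1)) · (max_i x_i − min_i x_i)². -/
open Finset Matrix

def IsStochastic {n : ℕ} (P : Matrix (Fin n) (Fin n) ℝ) : Prop :=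
  (∀ i j, 0 ≤ P i j) ∧ ∀ i, ∑ j, P i j = 1

def IsIrreducibleM {n : ℕ} (P : Matrix (Fin n) (Fin n) ℝ) : Prop :=
  ∀ i j, ∃ k : ℕ, 0 < (P ^ k) i j

def IsReversible {n : ℕ} (π : Fin n → ℝ) (P : Matrix (Fin n) (Fin n) ℝ) : Prop :=
  ∀ i j, π i * P i j = π j * P j i

/-- `μ(P) = min_{∅ ⊊ S ⊊ [n]} ∑_{i ∈ S} ∑_{j ∉ S} π_i P_{ij}`. -/
noncomputable def muP {n : ℕ} (π : Fin n → ℝ) (P : Matrix (Fin n) (Fin n) ℝ) : ℝ :=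
  sInf {m : ℝ | ∃ S : Finset (Fin n), S.Nonempty ∧ S ≠ Finset.univ ∧
    m = ∑ i ∈ S, ∑ j ∈ Sᶜ, π i * P i j}

/-!
With `w i j = π i * P i j`, reversibility makes `w` symmetric and turns the quadratic form into the
Dirichlet form `Q_P(x) = ½ ∑ w i j (x i - x j)²`. Sort the entries of `x` as `a 0 ≤ ⋯ ≤ a N` and
cut at every gap: the set `S k` of the `k + 1` smallest entries is a nonempty proper subset, so its
boundary weight is at least `μ(P)`. A pair `x i ≤ x j` crosses exactly the cuts between them, and
the squared gaps there add up to at most `(x j - x i)²`; hence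
`μ(P) ∑ₖ (a (k+1) - a k)² ≤ ∑ₖ cut(S k) (a (k+1) - a k)² ≤ Q_P(x)`.
Cauchy–Schwarz gives `(a N - a 0)² ≤ N ∑ₖ (a (k+1) - a k)²`.
-/

variable {ι : Type*} [Fintype ι]

def cut [DecidableEq ι] (w : ι → ι → ℝ) (S : Finset ι) : ℝ :=
  ∑ i ∈ S, ∑ j ∈ Sᶜ, w i j

lemma sum_sum_mul_swap_of_symm {w : ι → ι → ℝ} (hw : ∀ i j, w i j = w j i)
    (f : ι → ι → ℝ) : ∑ i, ∑ j, w i j * f j i = ∑ i, ∑ j, w i j * f i j := by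
  rw [sum_comm]
  exact sum_congr rfl fun i _ => sum_congr rfl fun j _ => by rw [hw]

lemma sum_sum_mul_sq_sub_of_symm {w : ι → ι → ℝ} (hw : ∀ i j, w i j = w j i) (x : ι → ℝ) :
    ∑ i, ∑ j, w i j * (x i - x j) ^ 2 = 2 * ∑ i, ∑ j, w i j * (x i * (x i - x j)) := by
  rw [two_mul]
  nth_rw 2 [← sum_sum_mul_swap_of_symm hw]
  simp only [← sum_add_distrib, ← mul_add]
  exact sum_congr rfl fun i _ => sum_congr rfl fun j _ => by ring

lemma sum_cut_mul_eq [DecidableEq ι] (w : ι → ι → ℝ) (T : ℕ → Finset ι) (s : Finset ℕ)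
    (c : ℕ → ℝ) :
    ∑ k ∈ s, cut w (T k) * c k
      = ∑ i, ∑ j, w i j * ∑ k ∈ s with i ∈ T k ∧ j ∉ T k, c k := by
  simp only [cut, mul_sum, sum_mul, sum_filter, mul_ite, mul_zero]
  simp_rw [sum_comm (t := s)]
  refine sum_congr rfl fun k _ => ?_
  simp only [ite_and, ← mem_compl, sum_ite_irrel, sum_const_zero, sum_ite_mem, univ_inter]

lemma sum_Ico_sq_sub_add_sum_Ico_sq_sub_le {a : ℕ → ℝ} (ha : Monotone a) (u v : ℕ) :
    ∑ k ∈ Ico u v, (a (k + 1) - a k) ^ 2 + ∑ k ∈ Ico v u, (a (k + 1) - a k) ^ 2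
      ≤ (a u - a v) ^ 2 := by
  wlog huv : u ≤ v generalizing u v
  · rw [add_comm, ← neg_sub, neg_sq]
    exact this v u (le_of_not_ge huv)
  rw [Ico_eq_empty_of_le huv, sum_empty, add_zero, ← neg_sub, neg_sq, ← sum_Ico_sub a huv]
  exact sum_sq_le_sq_sum_of_nonneg fun k _ => sub_nonneg.2 (ha k.le_succ)

theorem two_mul_sum_cut_mul_sq_sub_le [DecidableEq ι] {w : ι → ι → ℝ}
    (hw : ∀ i j, w i j = w j i) (hw₀ : ∀ i j, 0 ≤ w i j) {a : ℕ → ℝ} (ha : Monotone a)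
    (p : ι → ℕ) (N : ℕ) :
    2 * ∑ k ∈ range N, cut w {i | p i ≤ k} * (a (k + 1) - a k) ^ 2
      ≤ ∑ i, ∑ j, w i j * (a (p i) - a (p j)) ^ 2 := by
  set h : ℕ → ℕ → ℝ := fun u v => ∑ k ∈ Ico u v, (a (k + 1) - a k) ^ 2
  have hsum : ∑ k ∈ range N, cut w {i | p i ≤ k} * (a (k + 1) - a k) ^ 2
      ≤ ∑ i, ∑ j, w i j * h (p i) (p j) := by
    rw [sum_cut_mul_eq]
    gcongr with i _ j _
    · exact hw₀ i j
    refine sum_le_sum_of_subset_of_nonneg (fun k hk => ?_) fun k _ _ => sq_nonneg _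
    simp only [mem_filter, mem_univ, true_and, mem_range, mem_Ico] at hk ⊢
    omega
  calc 2 * ∑ k ∈ range N, cut w {i | p i ≤ k} * (a (k + 1) - a k) ^ 2
      ≤ 2 * ∑ i, ∑ j, w i j * h (p i) (p j) := by gcongr
    _ = ∑ i, ∑ j, w i j * (h (p i) (p j) + h (p j) (p i)) := by
      rw [two_mul]
      nth_rw 2 [← sum_sum_mul_swap_of_symm hw]
      simp only [← sum_add_distrib, ← mul_add]
    _ ≤ ∑ i, ∑ j, w i j * (a (p i) - a (p j)) ^ 2 := by
      gcongr with i _ j _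
      · exact hw₀ i j
      exact sum_Ico_sq_sub_add_sum_Ico_sq_sub_le ha _ _

lemma sq_sub_le_mul_sum_sq_sub (a : ℕ → ℝ) (N : ℕ) :
    (a N - a 0) ^ 2 ≤ N * ∑ k ∈ range N, (a (k + 1) - a k) ^ 2 := by
  rw [← sum_range_sub]
  simpa using sq_sum_le_card_mul_sum_sq (s := range N) (f := fun k => a (k + 1) - a k)

section sort

variable {α : Type*} [LinearOrder α] {N : ℕ}

/-- The `k`-th smallest entry of `x`, and its largest entry for every `k ≥ N`. -/
def sortedValue (x : Fin (N + 1) → α) (k : ℕ) : α :=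
  x (Tuple.sort x (Fin.clamp k N))

lemma monotone_sortedValue (x : Fin (N + 1) → α) : Monotone (sortedValue x) :=
  (Tuple.monotone_sort x).comp Fin.clamp_monotone

lemma sortedValue_sort_symm (x : Fin (N + 1) → α) (i : Fin (N + 1)) :
    sortedValue x ((Tuple.sort x).symm i) = x i := by
  have hclamp : Fin.clamp ((Tuple.sort x).symm i) N = (Tuple.sort x).symm i :=
    Fin.ext (min_eq_left (Fin.is_le _))
  rw [sortedValue, hclamp, Equiv.apply_symm_apply]

lemma sup'_eq_sortedValue (x : Fin (N + 1) → α) (h : (univ : Finset (Fin (N + 1))).Nonempty) :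
    univ.sup' h x = sortedValue x N :=
  le_antisymm
    (sup'_le _ _ fun i _ => sortedValue_sort_symm x i ▸ monotone_sortedValue x (Fin.is_le _))
    (le_sup' x (mem_univ _))

lemma inf'_eq_sortedValue (x : Fin (N + 1) → α) (h : (univ : Finset (Fin (N + 1))).Nonempty) :
    univ.inf' h x = sortedValue x 0 :=
  le_antisymm (inf'_le x (mem_univ _))
    (le_inf' _ _ fun i _ => sortedValue_sort_symm x i ▸ monotone_sortedValue x (Nat.zero_le _))

end sort

section muP

variable {n : ℕ} {π : Fin n → ℝ} {P : Matrix (Fin n) (Fin n) ℝ}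

lemma muP_le_cut {S : Finset (Fin n)} (hS : S.Nonempty) (hS' : S ≠ univ) :
    muP π P ≤ cut (fun i j => π i * P i j) S := by
  refine csInf_le (Set.Finite.bddBelow ?_) ⟨S, hS, hS', rfl⟩
  refine (Set.finite_range (cut fun i j => π i * P i j)).subset ?_
  rintro _ ⟨S, -, -, rfl⟩
  exact ⟨S, rfl⟩

lemma muP_nonneg (hπ : ∀ i, 0 ≤ π i) (hP : ∀ i j, 0 ≤ P i j) : 0 ≤ muP π P := by
  refine Real.sInf_nonneg ?_
  rintro _ ⟨S, -, -, rfl⟩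
  exact sum_nonneg fun i _ => sum_nonneg fun j _ => mul_nonneg (hπ i) (hP i j)

lemma sum_mul_sub_mulVec_eq_half_sum_sq_sub (hP : IsStochastic P) (hrev : IsReversible π P)
    (x : Fin n → ℝ) :
    ∑ i, π i * x i * (x i - P.mulVec x i)
      = 1 / 2 * ∑ i, ∑ j, π i * P i j * (x i - x j) ^ 2 := by
  rw [sum_sum_mul_sq_sub_of_symm (w := fun i j => π i * P i j) hrev, ← mul_assoc,
    one_div_mul_cancel two_ne_zero, one_mul]
  refine sum_congr rfl fun i _ => ?_
  have hrow : x i - P.mulVec x i = ∑ j, P i j * (x i - x j) := by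
    simp only [mul_sub, sum_sub_distrib, ← sum_mul, hP.2 i, one_mul, mulVec, dotProduct]
  rw [hrow, mul_sum]
  exact sum_congr rfl fun j _ => by ring

end muP

lemma muP_le_cut_of_lt {N k : ℕ} {π : Fin (N + 1) → ℝ}
    {P : Matrix (Fin (N + 1)) (Fin (N + 1)) ℝ} (e : Fin (N + 1) ≃ Fin (N + 1)) (hk : k < N) :
    muP π P ≤ cut (fun i j => π i * P i j) {i | e i ≤ k} := by
  refine muP_le_cut ⟨e.symm 0, by simp⟩ fun huniv => ?_
  have hlast : e.symm (Fin.last N) ∈ ({i | e i ≤ k} : Finset _) := by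
    rw [huniv]; exact mem_univ _
  simp only [mem_filter, mem_univ, Equiv.apply_symm_apply, Fin.val_last, true_and] at hlast
  omega

theorem quadratic_form_ge_mu {n : ℕ} (hn : 2 ≤ n) (P : Matrix (Fin n) (Fin n) ℝ)
    (π : Fin n → ℝ)
    (hP : IsStochastic P)
    (hπpos : ∀ i, 0 < π i)
    (hrev : IsReversible π P)
    (x : Fin n → ℝ) :
    ∑ i, π i * x i * (x i - P.mulVec x i)
      ≥ muP π P / (n - 1) *
        (Finset.univ.sup' ⟨⟨0, by omega⟩, Finset.mem_univ _⟩ x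
          - Finset.univ.inf' ⟨⟨0, by omega⟩, Finset.mem_univ _⟩ x) ^ 2 := by
  obtain ⟨N, rfl⟩ : ∃ N, n = N + 1 := ⟨n - 1, by omega⟩
  have hN : ((N + 1 : ℕ) : ℝ) - 1 = N := by push_cast; ring
  have hN₀ : (N : ℝ) ≠ 0 := Nat.cast_ne_zero.2 (by omega)
  have hμ : 0 ≤ muP π P := muP_nonneg (fun i => (hπpos i).le) hP.1
  have hcuts := two_mul_sum_cut_mul_sq_sub_le hrev
    (fun i j => mul_nonneg (hπpos i).le (hP.1 i j)) (monotone_sortedValue x)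
    (fun i => (Tuple.sort x).symm i) N
  simp only [sortedValue_sort_symm] at hcuts
  rw [ge_iff_le, show univ.sup' ⟨0, mem_univ _⟩ x = sortedValue x N from sup'_eq_sortedValue x _,
    show univ.inf' ⟨0, mem_univ _⟩ x = sortedValue x 0 from inf'_eq_sortedValue x _,
    sum_mul_sub_mulVec_eq_half_sum_sq_sub hP hrev, hN]
  set a := sortedValue x
  calc muP π P / N * (a N - a 0) ^ 2
      ≤ muP π P / N * (N * ∑ k ∈ range N, (a (k + 1) - a k) ^ 2) := by
        gcongr; exact sq_sub_le_mul_sum_sq_sub a N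
    _ = muP π P * ∑ k ∈ range N, (a (k + 1) - a k) ^ 2 := by field_simp
    _ ≤ ∑ k ∈ range N,
          cut (fun i j => π i * P i j) {i | (Tuple.sort x).symm i ≤ k} * (a (k + 1) - a k) ^ 2 := by
        rw [mul_sum]
        gcongr with k hk
        exact muP_le_cut_of_lt _ (mem_range.1 hk)
    _ ≤ 1 / 2 * ∑ i, ∑ j, π i * P i j * (x i - x j) ^ 2 := by linarith
end

section
/- Let P be a reversible stochastic matrix of size n ≥ 2 with Perron vector π. Then its second largest eigenvalue satisfies λ_2(P) ≤ 1 − 2μ(P)/(n−1), where μ(P) = min_{∅⊊S⊊[n]} Σ_{i∈S} Σ_{j∉S} π_i P_{ij}. -/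
open Finset Matrix

/-- The second largest eigenvalue of a reversible stochastic matrix: the supremum of
eigenvalues admitting an eigenvector `π`-orthogonal to the all-ones vector. -/
noncomputable def lambda2 {n : ℕ} (π : Fin n → ℝ) (P : Matrix (Fin n) (Fin n) ℝ) : ℝ :=
  sSup {l : ℝ | ∃ x : Fin n → ℝ, x ≠ 0 ∧ (∑ i, π i * x i) = 0 ∧ P.mulVec x = l • x}

private lemma key_bound {m : ℕ} (hm : 1 ≤ m) (P : Matrix (Fin (m+1)) (Fin (m+1)) ℝ)
    (π : Fin (m+1) → ℝ)
    (hP : IsStochastic P) (hπpos : ∀ i, 0 < π i) (hπsum : ∑ i, π i = 1)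
    (hrev : IsReversible π P) (μ : ℝ) (hμ0 : 0 ≤ μ)
    (hμle : ∀ S : Finset (Fin (m+1)), S.Nonempty → S ≠ Finset.univ →
      μ ≤ ∑ i ∈ S, ∑ j ∈ Sᶜ, π i * P i j)
    (l : ℝ) (x : Fin (m+1) → ℝ) (hx0 : x ≠ 0) (horth : (∑ i, π i * x i) = 0)
    (heig : P.mulVec x = l • x) : l ≤ 1 - 2 * μ / m := by
  have hmR : (0:ℝ) < m := by exact_mod_cast hm
  -- the π-weighted eigenvalue relation
  have hmu : ∀ i, ∑ j, P i j * x j = l * x i := by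
    intro i
    have := congrFun heig i
    simpa [Matrix.mulVec, dotProduct] using this
  set V : ℝ := ∑ i, π i * x i ^ 2 with hVdef
  have hV : 0 < V := by
    obtain ⟨i₀, hi₀⟩ := Function.ne_iff.mp hx0
    refine Finset.sum_pos' (fun i _ => mul_nonneg (hπpos i).le (sq_nonneg _))
      ⟨i₀, Finset.mem_univ _, mul_pos (hπpos i₀) (sq_pos_of_ne_zero hi₀)⟩
  -- Dirichlet form identity
  have hAA : ∀ i : Fin (m+1), ∑ j, π i * P i j * x i ^ 2 = π i * x i ^ 2 := by
    intro i
    have h : ∑ j, π i * P i j * x i ^ 2 = (π i * x i ^ 2) * ∑ j, P i j := by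
      rw [Finset.mul_sum]
      exact Finset.sum_congr rfl fun j _ => by ring
    rw [h, hP.2 i, mul_one]
  have hBB : ∀ i : Fin (m+1), ∑ j, π i * P i j * (x i * x j) = π i * x i * (l * x i) := by
    intro i
    have h : ∑ j, π i * P i j * (x i * x j) = (π i * x i) * ∑ j, P i j * x j := by
      rw [Finset.mul_sum]
      exact Finset.sum_congr rfl fun j _ => by ring
    rw [h, hmu i]
  have hCC : ∑ i, ∑ j, π i * P i j * x j ^ 2 = V := by
    rw [show (∑ i, ∑ j, π i * P i j * x j ^ 2)
        = ∑ i : Fin (m+1), ∑ j : Fin (m+1), π j * P j i * x j ^ 2 from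
      Finset.sum_congr rfl fun i _ => Finset.sum_congr rfl fun j _ => by rw [hrev i j]]
    rw [Finset.sum_comm]
    refine Finset.sum_congr rfl fun j _ => ?_
    have h : ∑ i, π j * P j i * x j ^ 2 = (π j * x j ^ 2) * ∑ i, P j i := by
      rw [Finset.mul_sum]
      exact Finset.sum_congr rfl fun i _ => by ring
    rw [h, hP.2 j, mul_one]
  have hE : ∑ i, ∑ j, π i * P i j * (x i - x j) ^ 2 = 2 * (1 - l) * V := by
    calc ∑ i, ∑ j, π i * P i j * (x i - x j) ^ 2
        = ∑ i, (π i * x i ^ 2 - 2 * (π i * x i * (l * x i)) + ∑ j, π i * P i j * x j ^ 2) := by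
          refine Finset.sum_congr rfl fun i _ => ?_
          rw [← hAA i, ← hBB i, Finset.mul_sum, ← Finset.sum_sub_distrib, ← Finset.sum_add_distrib]
          exact Finset.sum_congr rfl fun j _ => by ring
      _ = (∑ i, (π i * x i ^ 2 - 2 * (π i * x i * (l * x i)))) + ∑ i, ∑ j, π i * P i j * x j ^ 2 :=
          Finset.sum_add_distrib
      _ = 2 * (1 - l) * V := by
          rw [hCC, Finset.sum_sub_distrib]
          have h2 : ∑ i, 2 * (π i * x i * (l * x i)) = (2 * l) * ∑ i, π i * x i ^ 2 := by
            rw [Finset.mul_sum]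
            exact Finset.sum_congr rfl fun i _ => by ring
          rw [h2, ← hVdef]
          ring
  -- variance identity
  have hVar : ∑ i, ∑ j, π i * π j * (x i - x j) ^ 2 = 2 * V := by
    calc ∑ i, ∑ j, π i * π j * (x i - x j) ^ 2
        = ∑ i, (π i * x i ^ 2 * (∑ j, π j) - 2 * (π i * x i * ∑ j, π j * x j)
            + π i * ∑ j, π j * x j ^ 2) := by
          refine Finset.sum_congr rfl fun i _ => ?_
          rw [Finset.mul_sum, Finset.mul_sum, Finset.mul_sum, Finset.mul_sum,
            ← Finset.sum_sub_distrib, ← Finset.sum_add_distrib]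
          exact Finset.sum_congr rfl fun j _ => by ring
      _ = ∑ i, (π i * x i ^ 2 + π i * V) := by
          refine Finset.sum_congr rfl fun i _ => ?_
          rw [hπsum, horth, ← hVdef]
          ring
      _ = 2 * V := by
          rw [Finset.sum_add_distrib, ← Finset.sum_mul, hπsum, ← hVdef]
          ring
  -- sorted eigenvector
  set σ : Equiv.Perm (Fin (m+1)) := Tuple.sort x with hσ
  set y : Fin (m+1) → ℝ := fun a => x (σ a) with hy
  have hymono : Monotone y := Tuple.monotone_sort x
  set Y : ℕ → ℝ := fun k => y ⟨min k m, by omega⟩ with hYdef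
  have hYle : ∀ j k : ℕ, j ≤ k → Y j ≤ Y k := by
    intro j k h
    exact hymono (by simp only [Fin.mk_le_mk]; omega)
  set G : ℕ → ℝ := fun k => Y (k+1) - Y k with hGdef
  have hG0 : ∀ k, 0 ≤ G k := fun k => sub_nonneg.mpr (hYle _ _ (Nat.le_succ k))
  have hYa : ∀ a : Fin (m+1), Y a = y a := by
    intro a
    simp only [hYdef]
    congr 1
    exact Fin.ext (by simpa using Nat.lt_succ_iff.mp a.isLt)
  set SG : ℝ := ∑ k ∈ Finset.range m, G k ^ 2 with hSGdef
  have hSG0 : 0 ≤ SG := Finset.sum_nonneg fun k _ => sq_nonneg _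
  have tele : ∀ a b : ℕ, a ≤ b → ∑ k ∈ Finset.Ico a b, G k = Y b - Y a := by
    intro a b hab
    simp only [hGdef]
    rw [Finset.sum_Ico_eq_sub _ hab, Finset.sum_range_sub (f := Y), Finset.sum_range_sub (f := Y)]
    ring
  have hsubIco : ∀ a b : Fin (m+1), Finset.Ico (a:ℕ) (b:ℕ) ⊆ Finset.range m := by
    intro a b k hk
    rw [Finset.mem_Ico] at hk
    rw [Finset.mem_range]
    have := b.isLt
    omega
  -- pair upper bound (Cauchy–Schwarz along the path)
  have pairB : ∀ a b : Fin (m+1), (y a - y b) ^ 2 ≤ m * SG := by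
    have main : ∀ a b : Fin (m+1), (a:ℕ) ≤ (b:ℕ) → (y b - y a) ^ 2 ≤ m * SG := by
      intro a b hab
      rw [← hYa, ← hYa, ← tele _ _ hab]
      calc (∑ k ∈ Finset.Ico (a:ℕ) (b:ℕ), G k) ^ 2
          ≤ (Finset.Ico (a:ℕ) (b:ℕ)).card * ∑ k ∈ Finset.Ico (a:ℕ) (b:ℕ), G k ^ 2 :=
            sq_sum_le_card_mul_sum_sq
        _ ≤ m * SG := by
            refine mul_le_mul ?_ ?_ (Finset.sum_nonneg fun k _ => sq_nonneg _) hmR.le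
            · rw [Nat.card_Ico]
              have hbl := b.isLt
              have h2 : (b:ℕ) - (a:ℕ) ≤ m := by omega
              exact_mod_cast h2
            · exact Finset.sum_le_sum_of_subset_of_nonneg (hsubIco a b) fun k _ _ => sq_nonneg _
    intro a b
    rcases le_total (a:ℕ) (b:ℕ) with h | h
    · rw [show (y a - y b) ^ 2 = (y b - y a) ^ 2 from by ring]
      exact main a b h
    · exact main b a h
  -- pair lower bound
  have pairA : ∀ a b : Fin (m+1),
      (∑ k ∈ Finset.range m, if ((a:ℕ) ≤ k ∧ k < (b:ℕ)) ∨ ((b:ℕ) ≤ k ∧ k < (a:ℕ))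
        then G k ^ 2 else 0) ≤ (y a - y b) ^ 2 := by
    have main : ∀ a b : Fin (m+1), (a:ℕ) ≤ (b:ℕ) →
        (∑ k ∈ Finset.range m, if ((a:ℕ) ≤ k ∧ k < (b:ℕ)) ∨ ((b:ℕ) ≤ k ∧ k < (a:ℕ))
          then G k ^ 2 else 0) ≤ (y a - y b) ^ 2 := by
      intro a b hab
      have hrw : (∑ k ∈ Finset.range m, if ((a:ℕ) ≤ k ∧ k < (b:ℕ)) ∨ ((b:ℕ) ≤ k ∧ k < (a:ℕ))
          then G k ^ 2 else 0) = ∑ k ∈ Finset.Ico (a:ℕ) (b:ℕ), G k ^ 2 := by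
        rw [Finset.sum_congr rfl (fun k _ => if_congr
            (show (((a:ℕ) ≤ k ∧ k < (b:ℕ)) ∨ ((b:ℕ) ≤ k ∧ k < (a:ℕ)))
              ↔ k ∈ Finset.Ico (a:ℕ) (b:ℕ) by rw [Finset.mem_Ico]; omega) rfl rfl),
          Finset.sum_ite_mem, Finset.inter_eq_right.mpr (hsubIco a b)]
      rw [hrw, show (y a - y b) ^ 2 = (y b - y a) ^ 2 from by ring, ← hYa, ← hYa, ← tele _ _ hab]
      exact Finset.sum_sq_le_sq_sum_of_nonneg fun k _ => hG0 k
    intro a b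
    rcases le_total (a:ℕ) (b:ℕ) with h | h
    · exact main a b h
    · rw [show (y a - y b) ^ 2 = (y b - y a) ^ 2 from by ring]
      refine le_trans (le_of_eq (Finset.sum_congr rfl fun k _ => if_congr or_comm rfl rfl))
        (main b a h)
  -- change of variables
  have hchange : ∀ f : Fin (m+1) → Fin (m+1) → ℝ,
      ∑ i, ∑ j, f i j = ∑ a, ∑ b, f (σ a) (σ b) := by
    intro f
    rw [← Equiv.sum_comp σ (fun i => ∑ j, f i j)]
    exact Finset.sum_congr rfl fun a _ => (Equiv.sum_comp σ (fun j => f (σ a) j)).symm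
  -- upper bound for variance
  have hVup : 2 * V ≤ m * SG := by
    rw [← hVar, hchange (fun i j => π i * π j * (x i - x j) ^ 2)]
    calc ∑ a, ∑ b, π (σ a) * π (σ b) * (x (σ a) - x (σ b)) ^ 2
        ≤ ∑ a, ∑ b, π (σ a) * π (σ b) * (m * SG) := by
          refine Finset.sum_le_sum fun a _ => Finset.sum_le_sum fun b _ => ?_
          exact mul_le_mul_of_nonneg_left (pairB a b) (mul_nonneg (hπpos _).le (hπpos _).le)
      _ = m * SG := by
          simp_rw [← Finset.sum_mul, ← Finset.mul_sum]
          rw [Equiv.sum_comp σ π, hπsum]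
          ring_nf
          rw [Equiv.sum_comp σ π, hπsum]
          ring
  -- lower bound for Dirichlet form
  have hQcut : ∀ k ∈ Finset.range m, μ ≤
      ∑ a ∈ Finset.univ.filter (fun a : Fin (m+1) => (a:ℕ) ≤ k),
        ∑ b ∈ Finset.univ.filter (fun b : Fin (m+1) => k < (b:ℕ)), π (σ a) * P (σ a) (σ b) := by
    intro k hk
    rw [Finset.mem_range] at hk
    have hinj : ∀ x ∈ Finset.univ.filter (fun a : Fin (m+1) => (a:ℕ) ≤ k),
        ∀ y ∈ Finset.univ.filter (fun a : Fin (m+1) => (a:ℕ) ≤ k), σ x = σ y → x = y :=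
      fun x _ y _ h => σ.injective h
    have hinj' : ∀ x ∈ Finset.univ.filter (fun b : Fin (m+1) => k < (b:ℕ)),
        ∀ y ∈ Finset.univ.filter (fun b : Fin (m+1) => k < (b:ℕ)), σ x = σ y → x = y :=
      fun x _ y _ h => σ.injective h
    set S : Finset (Fin (m+1)) :=
      (Finset.univ.filter (fun a : Fin (m+1) => (a:ℕ) ≤ k)).image σ with hS
    have hSne : S.Nonempty :=
      ⟨σ ⟨0, by omega⟩, Finset.mem_image_of_mem _ (by simp)⟩
    have hSuniv : S ≠ Finset.univ := by
      intro h
      have hmem : σ ⟨m, by omega⟩ ∈ S := h ▸ Finset.mem_univ _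
      obtain ⟨a, ha, hae⟩ := Finset.mem_image.mp hmem
      have ha' : a = ⟨m, by omega⟩ := σ.injective hae
      rw [ha', Finset.mem_filter] at ha
      simp only [Finset.mem_univ, true_and] at ha
      omega
    have hcompl : Sᶜ = (Finset.univ.filter (fun b : Fin (m+1) => k < (b:ℕ))).image σ := by
      ext j
      simp only [hS, Finset.mem_compl, Finset.mem_image, Finset.mem_filter,
        Finset.mem_univ, true_and]
      constructor
      · intro hj
        refine ⟨σ.symm j, ?_, σ.apply_symm_apply j⟩
        by_contra hc
        push_neg at hc
        exact hj ⟨σ.symm j, by omega, σ.apply_symm_apply j⟩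
      · rintro ⟨b, hb, rfl⟩ ⟨a, ha, hab⟩
        have hab' := σ.injective hab
        subst hab'
        omega
    have h := hμle S hSne hSuniv
    rw [hcompl, hS, Finset.sum_image hinj] at h
    exact h.trans_eq (Finset.sum_congr rfl fun a _ => Finset.sum_image hinj')
  have swap3 : ∀ f : Fin (m+1) → Fin (m+1) → ℕ → ℝ,
      ∑ a, ∑ b, ∑ k ∈ Finset.range m, f a b k
        = ∑ k ∈ Finset.range m, ∑ a, ∑ b, f a b k := by
    intro f
    have h1 : ∀ a : Fin (m+1), ∑ b : Fin (m+1), ∑ k ∈ Finset.range m, f a b k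
        = ∑ k ∈ Finset.range m, ∑ b : Fin (m+1), f a b k := fun a => Finset.sum_comm
    simp_rw [h1]
    exact Finset.sum_comm
  have cutk : ∀ k ∈ Finset.range m, 2 * μ * G k ^ 2 ≤
      ∑ a : Fin (m+1), ∑ b : Fin (m+1), (if ((a:ℕ) ≤ k ∧ k < (b:ℕ)) ∨ ((b:ℕ) ≤ k ∧ k < (a:ℕ))
        then π (σ a) * P (σ a) (σ b) * G k ^ 2 else 0) := by
    intro k hk
    have hsplit : ∀ a b : Fin (m+1),
        (if ((a:ℕ) ≤ k ∧ k < (b:ℕ)) ∨ ((b:ℕ) ≤ k ∧ k < (a:ℕ))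
          then π (σ a) * P (σ a) (σ b) * G k ^ 2 else 0)
        = (if ((a:ℕ) ≤ k ∧ k < (b:ℕ)) then π (σ a) * P (σ a) (σ b) * G k ^ 2 else 0)
          + (if ((b:ℕ) ≤ k ∧ k < (a:ℕ)) then π (σ a) * P (σ a) (σ b) * G k ^ 2 else 0) := by
      intro a b
      by_cases h1 : (a:ℕ) ≤ k ∧ k < (b:ℕ) <;> by_cases h2 : (b:ℕ) ≤ k ∧ k < (a:ℕ) <;>
        simp [h1, h2] <;> omega
    simp_rw [hsplit, Finset.sum_add_distrib]
    have hsym : (∑ a : Fin (m+1), ∑ b : Fin (m+1), (if ((b:ℕ) ≤ k ∧ k < (a:ℕ))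
          then π (σ a) * P (σ a) (σ b) * G k ^ 2 else 0))
        = ∑ a : Fin (m+1), ∑ b : Fin (m+1), (if ((a:ℕ) ≤ k ∧ k < (b:ℕ))
          then π (σ a) * P (σ a) (σ b) * G k ^ 2 else 0) := by
      rw [Finset.sum_comm]
      refine Finset.sum_congr rfl fun a _ => Finset.sum_congr rfl fun b _ => ?_
      exact if_congr Iff.rfl (by rw [hrev (σ b) (σ a)]) rfl
    rw [hsym]
    have hfilter : (∑ a : Fin (m+1), ∑ b : Fin (m+1), (if ((a:ℕ) ≤ k ∧ k < (b:ℕ))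
          then π (σ a) * P (σ a) (σ b) * G k ^ 2 else 0))
        = (∑ a ∈ Finset.univ.filter (fun a : Fin (m+1) => (a:ℕ) ≤ k),
            ∑ b ∈ Finset.univ.filter (fun b : Fin (m+1) => k < (b:ℕ)),
              π (σ a) * P (σ a) (σ b)) * G k ^ 2 := by
      have hab : ∀ a : Fin (m+1),
          (∑ b : Fin (m+1), if ((a:ℕ) ≤ k ∧ k < (b:ℕ))
            then π (σ a) * P (σ a) (σ b) * G k ^ 2 else 0)
          = if (a:ℕ) ≤ k then (∑ b : Fin (m+1), if k < (b:ℕ)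
            then π (σ a) * P (σ a) (σ b) * G k ^ 2 else 0) else 0 := by
        intro a
        by_cases h : (a:ℕ) ≤ k
        · simp only [h, true_and, if_true]
        · simp only [h, false_and, if_false, Finset.sum_const_zero]
      simp_rw [hab, ← Finset.sum_filter]
      rw [Finset.sum_mul]
      exact Finset.sum_congr rfl fun a _ => by rw [Finset.sum_mul]
    rw [hfilter]
    have hq := hQcut k hk
    nlinarith [sq_nonneg (G k), mul_le_mul_of_nonneg_right hq (sq_nonneg (G k))]
  have hEdown : 2 * μ * SG ≤ 2 * (1 - l) * V := by
    rw [← hE, hchange (fun i j => π i * P i j * (x i - x j) ^ 2)]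
    have step1 : ∑ a : Fin (m+1), ∑ b : Fin (m+1), (π (σ a) * P (σ a) (σ b)) *
        (∑ k ∈ Finset.range m, if ((a:ℕ) ≤ k ∧ k < (b:ℕ)) ∨ ((b:ℕ) ≤ k ∧ k < (a:ℕ))
          then G k ^ 2 else 0)
        ≤ ∑ a, ∑ b, π (σ a) * P (σ a) (σ b) * (x (σ a) - x (σ b)) ^ 2 := by
      refine Finset.sum_le_sum fun a _ => Finset.sum_le_sum fun b _ => ?_
      exact mul_le_mul_of_nonneg_left (pairA a b) (mul_nonneg (hπpos _).le (hP.1 _ _))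
    refine le_trans ?_ step1
    have hswap : ∑ a : Fin (m+1), ∑ b : Fin (m+1), (π (σ a) * P (σ a) (σ b)) *
        (∑ k ∈ Finset.range m, if ((a:ℕ) ≤ k ∧ k < (b:ℕ)) ∨ ((b:ℕ) ≤ k ∧ k < (a:ℕ))
          then G k ^ 2 else 0)
        = ∑ k ∈ Finset.range m, ∑ a : Fin (m+1), ∑ b : Fin (m+1),
            (if ((a:ℕ) ≤ k ∧ k < (b:ℕ)) ∨ ((b:ℕ) ≤ k ∧ k < (a:ℕ))
              then π (σ a) * P (σ a) (σ b) * G k ^ 2 else 0) := by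
      simp_rw [Finset.mul_sum, mul_ite, mul_zero]
      exact swap3 _
    rw [hswap]
    have hdist : 2 * μ * SG = ∑ k ∈ Finset.range m, 2 * μ * G k ^ 2 := by
      rw [hSGdef, Finset.mul_sum]
    rw [hdist]
    exact Finset.sum_le_sum cutk
  -- conclusion
  have hfin : 2 * μ ≤ (1 - l) * m := by
    nlinarith [mul_le_mul_of_nonneg_left hVup hμ0, mul_le_mul_of_nonneg_left hEdown hmR.le]
  have : 2 * μ / m ≤ 1 - l := by
    rw [div_le_iff₀ hmR]
    linarith
  linarith

theorem lambda2_le_analytic_bound {n : ℕ} (hn : 2 ≤ n) (P : Matrix (Fin n) (Fin n) ℝ)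
    (π : Fin n → ℝ)
    (hP : IsStochastic P) (hirr : IsIrreducibleM P)
    (hπpos : ∀ i, 0 < π i) (hπsum : ∑ i, π i = 1)
    (hrev : IsReversible π P) :
    lambda2 π P ≤ 1 - 2 * muP π P / (n - 1) := by
  obtain ⟨m, rfl⟩ : ∃ m, n = m + 1 := ⟨n - 1, by omega⟩
  have hm : 1 ≤ m := by omega
  set Q : Finset (Fin (m+1)) → ℝ := fun S => ∑ i ∈ S, ∑ j ∈ Sᶜ, π i * P i j with hQdef
  have hQ0 : ∀ S, 0 ≤ Q S := fun S =>
    Finset.sum_nonneg fun i _ => Finset.sum_nonneg fun j _ => mul_nonneg (hπpos i).le (hP.1 i j)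
  have hbdd : BddBelow {mm : ℝ | ∃ S : Finset (Fin (m+1)), S.Nonempty ∧ S ≠ Finset.univ ∧
      mm = ∑ i ∈ S, ∑ j ∈ Sᶜ, π i * P i j} := by
    refine ⟨0, ?_⟩
    rintro r ⟨S, -, -, rfl⟩
    exact hQ0 S
  have hμle : ∀ S : Finset (Fin (m+1)), S.Nonempty → S ≠ Finset.univ →
      muP π P ≤ ∑ i ∈ S, ∑ j ∈ Sᶜ, π i * P i j := fun S h1 h2 =>
    csInf_le hbdd ⟨S, h1, h2, rfl⟩
  have hμ0 : 0 ≤ muP π P := Real.sInf_nonneg (by rintro r ⟨S, -, -, rfl⟩; exact hQ0 S)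
  -- μ ≤ 1/2
  obtain ⟨i₀, -, hi₀⟩ : ∃ i ∈ Finset.univ, π i ≤ 1/(m+1 : ℝ) := by
    apply Finset.exists_le_of_sum_le Finset.univ_nonempty
    rw [hπsum, Finset.sum_const, Finset.card_univ, Fintype.card_fin, nsmul_eq_mul,
      mul_one_div]
    rw [show ((m+1:ℕ):ℝ) = (m:ℝ)+1 by push_cast; ring, div_self (by positivity)]
  have hμhalf : muP π P ≤ 1/2 := by
    have hne : ({i₀} : Finset (Fin (m+1))).Nonempty := ⟨i₀, Finset.mem_singleton_self _⟩
    have hnu : ({i₀} : Finset (Fin (m+1))) ≠ Finset.univ := by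
      intro h
      have := congrArg Finset.card h
      simp [Finset.card_univ] at this
      omega
    refine (hμle _ hne hnu).trans ?_
    rw [Finset.sum_singleton]
    have h1 : ∑ j ∈ ({i₀} : Finset (Fin (m+1)))ᶜ, π i₀ * P i₀ j ≤ ∑ j, π i₀ * P i₀ j :=
      Finset.sum_le_sum_of_subset_of_nonneg (Finset.subset_univ _)
        (fun j _ _ => mul_nonneg (hπpos i₀).le (hP.1 i₀ j))
    refine h1.trans ?_
    rw [← Finset.mul_sum, hP.2 i₀, mul_one]
    refine hi₀.trans ?_
    rw [div_le_div_iff₀ (by positivity) (by norm_num)]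
    push_cast
    linarith [show (1:ℝ) ≤ m by exact_mod_cast hm]
  have hmR : (0:ℝ) < m := by exact_mod_cast hm
  have hcast : ((m+1 : ℕ) : ℝ) - 1 = (m : ℝ) := by push_cast; ring
  rw [hcast]
  have hB : 0 ≤ 1 - 2 * muP π P / m := by
    rw [sub_nonneg, div_le_one hmR]
    nlinarith [show (1:ℝ) ≤ m by exact_mod_cast hm]
  apply Real.sSup_le _ hB
  rintro l ⟨x, hx0, horth, heig⟩
  exact key_bound hm P π hP hπpos hπsum hrev (muP π P) hμ0 hμle l x hx0 horth heig
end

section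
/- Let P be a reversible stochastic matrix with Perron vector π. For distinct nodes i,j, let Γ_{i,j} be a nonempty set of pairwise edge-disjoint directed paths from i to j in the graph of P, and define the P-length of a path γ = u_1,…,u_{ℓ+1} as |γ|_P = Σ_k (π_{u_k} P_{u_k u_{k+1}})^{-1}, and κ(P) = max_{i≠j} (Σ_{γ∈Γ_{i,j}} |γ|_P^{-1})^{-1}. Then λ_2(P) ≤ 1 − 1/κ(P). -/
/-!
Let `x` be an eigenvector of `P` with eigenvalue `λ`, `π`-orthogonal to the constants. By
reversibility and `∑ⱼ Pᵢⱼ = 1`, `∑ᵢⱼ πᵢ Pᵢⱼ (xᵢ - xⱼ)² = 2 (1 - λ) ∑ᵢ πᵢ xᵢ²`, while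
`∑ᵢⱼ πᵢ πⱼ (xᵢ - xⱼ)² = 2 ∑ᵢ πᵢ xᵢ²`. So it suffices to show
`(xᵢ - xⱼ)² ≤ κ(P) ∑ᵢⱼ πᵢ Pᵢⱼ (xᵢ - xⱼ)²` for all `i ≠ j`.

Along a path `γ` from `i` to `j` (after erasing its loops), `xᵢ - xⱼ` telescopes over the edges
of `γ`, and Cauchy–Schwarz with weights `πᵤ Pᵤᵥ` gives `|γ|_P⁻¹ (xᵢ - xⱼ)² ≤` the energy of `x`
on the edges of `γ`. Summing over an edge-disjoint family counts each edge at most once, which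
gives the pairwise bound. Finally `κ(P) ≥ 1`: the paths of `Γ i j` leave `i` through distinct
edges, so `∑_γ |γ|_P⁻¹ ≤ ∑ᵥ πᵢ Pᵢᵥ = πᵢ ≤ 1`.
-/

open Finset Matrix

/-- A list of vertices `l = u₁, …, u_{ℓ+1}` is a directed path from `i` to `j` in the
graph of `P` if it starts at `i`, ends at `j`, and every consecutive pair is an edge
(positive entry of `P`). -/
def IsPathFrom {n : ℕ} (P : Matrix (Fin n) (Fin n) ℝ) (i j : Fin n)
    (l : List (Fin n)) : Prop :=
  l.head? = some i ∧ l.getLast? = some j ∧ 2 ≤ l.length ∧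
    ∀ e ∈ l.zip l.tail, 0 < P e.1 e.2

/-- The paths in `Γ` are pairwise edge-disjoint. -/
def EdgeDisjointFamily {n : ℕ} (Γ : Finset (List (Fin n))) : Prop :=
  ∀ γ₁ ∈ Γ, ∀ γ₂ ∈ Γ, γ₁ ≠ γ₂ → ∀ e : Fin n × Fin n,
    e ∈ γ₁.zip γ₁.tail → e ∉ γ₂.zip γ₂.tail

/-- The `P`-length of a path: `|γ|_P = ∑_k (π_{u_k} P_{u_k u_{k+1}})⁻¹`. -/
noncomputable def plen {n : ℕ} (π : Fin n → ℝ) (P : Matrix (Fin n) (Fin n) ℝ)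
    (l : List (Fin n)) : ℝ :=
  ((l.zip l.tail).map (fun e => (π e.1 * P e.1 e.2)⁻¹)).sum

namespace List

variable {α : Type*}

theorem zip_tail_append_cons (A : List α) (v : α) (B : List α) :
    (A ++ v :: B).zip (A ++ v :: B).tail =
      (A ++ [v]).zip (A ++ [v]).tail ++ (v :: B).zip B := by
  induction A with
  | nil => simp
  | cons a A ih =>
    cases A with
    | nil => simp
    | cons b A => simpa using ih

theorem sum_map_zip_tail_sub {G : Type*} [AddCommGroup G] (x : α → G) :
    ∀ {l : List α} {i j : α}, l.head? = some i → l.getLast? = some j →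
      ((l.zip l.tail).map fun e => x e.1 - x e.2).sum = x i - x j
  | [a], i, j, hi, hj => by simp_all
  | a :: b :: t, i, j, hi, hj => by
    simp only [head?_cons, Option.some.injEq, getLast?_cons_cons] at hi hj
    have ih := sum_map_zip_tail_sub x (l := b :: t) rfl hj
    simp only [tail_cons, zip_cons_cons, map_cons, sum_cons] at ih ⊢
    rw [ih, ← hi]
    abel

theorem Nodup.zip_tail : ∀ {l : List α}, l.Nodup → (l.zip l.tail).Nodup
  | [], _ => by simp
  | [_], _ => by simp
  | a :: b :: t, h => by
    rw [nodup_cons] at h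
    simpa using ⟨fun hmem => h.1 (of_mem_zip hmem).1, Nodup.zip_tail h.2⟩

theorem exists_eq_append_cons_append_cons_of_not_nodup {l : List α} (h : ¬l.Nodup) :
    ∃ A v M D, l = (A ++ v :: M) ++ v :: D := by
  obtain ⟨v, hvv⟩ := not_forall_not.1 (mt nodup_iff_sublist.2 h)
  obtain ⟨r₁, r₂, rfl, hv₁, hv₂⟩ := cons_sublist_iff.1 hvv
  obtain ⟨A, B, rfl⟩ := append_of_mem hv₁
  obtain ⟨C, D, rfl⟩ := append_of_mem (singleton_sublist.1 hv₂)
  exact ⟨A, v, B ++ C, D, by simp⟩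

theorem exists_nodup_zip_tail_sublist (l : List α) :
    ∃ l' : List α, l'.Nodup ∧ l'.head? = l.head? ∧ l'.getLast? = l.getLast? ∧
      (l'.zip l'.tail).Sublist (l.zip l.tail) := by
  induction h : l.length using Nat.strong_induction_on generalizing l with
  | _ N ih =>
  by_cases hnd : l.Nodup
  · exact ⟨l, hnd, rfl, rfl, Sublist.refl _⟩
  obtain ⟨A, v, M, D, rfl⟩ := exists_eq_append_cons_append_cons_of_not_nodup hnd
  obtain ⟨l', hnd', hhead, hlast, hsub⟩ := ih (A ++ v :: D).length (by simp [← h]) _ rfl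
  refine ⟨l', hnd', by simp [hhead], by simp [hlast, getLast?_cons], hsub.trans ?_⟩
  have hloop := zip_tail_append_cons (v :: M) v D
  simp only [cons_append, tail_cons] at hloop
  rw [append_assoc, cons_append, zip_tail_append_cons A v D,
    zip_tail_append_cons A v (M ++ v :: D), hloop]
  exact (sublist_append_right _ _).append_left _

theorem mem_zip_tail_getD_one {l : List α} {i : α} (hi : l.head? = some i)
    (hl : 2 ≤ l.length) : (i, l.getD 1 i) ∈ l.zip l.tail := by
  match l, hi, hl with
  | a :: b :: t, hi, _ => simp_all

end List

section PathLength

variable {α : Type*} (q : α × α → ℝ)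

-- `plen π P` is `pathLength` for the edge weights `(u, v) ↦ π u * P u v`.
noncomputable def pathLength (l : List α) : ℝ :=
  ((l.zip l.tail).map fun e => (q e)⁻¹).sum

noncomputable def pathEnergy [DecidableEq α] (x : α → ℝ) (l : List α) : ℝ :=
  ∑ e ∈ (l.zip l.tail).toFinset, q e * (x e.1 - x e.2) ^ 2

variable {q}

theorem pathLength_nonneg {l : List α} (hq : ∀ e ∈ l.zip l.tail, 0 ≤ q e) :
    0 ≤ pathLength q l :=
  List.sum_nonneg <| List.forall_mem_map.2 fun e he => inv_nonneg.2 (hq e he)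

theorem pathLength_le_of_sublist {l l' : List α}
    (hsub : (l'.zip l'.tail).Sublist (l.zip l.tail)) (hq : ∀ e ∈ l.zip l.tail, 0 ≤ q e) :
    pathLength q l' ≤ pathLength q l :=
  (hsub.map _).sum_le_sum <| List.forall_mem_map.2 fun e he => inv_nonneg.2 (hq e he)

theorem inv_le_pathLength {l : List α} {e : α × α} (he : e ∈ l.zip l.tail)
    (hq : ∀ e ∈ l.zip l.tail, 0 ≤ q e) : (q e)⁻¹ ≤ pathLength q l :=
  List.single_le_sum (List.forall_mem_map.2 fun e he => inv_nonneg.2 (hq e he)) _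
    (List.mem_map_of_mem he)

theorem pathLength_pos {l : List α} {e : α × α} (he : e ∈ l.zip l.tail)
    (hq : ∀ e ∈ l.zip l.tail, 0 < q e) : 0 < pathLength q l :=
  (inv_pos.2 (hq e he)).trans_le (inv_le_pathLength he fun e he => (hq e he).le)

theorem inv_pathLength_le {l : List α} {e : α × α} (he : e ∈ l.zip l.tail)
    (hq : ∀ e ∈ l.zip l.tail, 0 < q e) : (pathLength q l)⁻¹ ≤ q e := by
  simpa using inv_anti₀ (inv_pos.2 (hq e he)) (inv_le_pathLength he fun e he => (hq e he).le)

variable [DecidableEq α]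

theorem pathEnergy_nonneg (x : α → ℝ) {l : List α} (hq : ∀ e ∈ l.zip l.tail, 0 ≤ q e) :
    0 ≤ pathEnergy q x l :=
  sum_nonneg fun e he => mul_nonneg (hq e (List.mem_toFinset.1 he)) (sq_nonneg _)

theorem sq_sub_le_pathLength_mul_of_nodup (x : α → ℝ) {l : List α} {i j : α}
    (hnd : (l.zip l.tail).Nodup) (hi : l.head? = some i) (hj : l.getLast? = some j)
    (hq : ∀ e ∈ l.zip l.tail, 0 < q e) :
    (x i - x j) ^ 2 ≤ pathLength q l * pathEnergy q x l := by
  rw [← List.sum_map_zip_tail_sub x hi hj, pathLength, pathEnergy, ← List.sum_toFinset _ hnd,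
    ← List.sum_toFinset _ hnd]
  refine sum_sq_le_sum_mul_sum_of_sq_le_mul _ (fun e he => ?_) (fun e he => ?_)
    (fun e he => ?_)
  all_goals have hqe := hq e (List.mem_toFinset.1 he)
  · positivity
  · positivity
  · rw [inv_mul_cancel_left₀ hqe.ne']

theorem sq_sub_le_pathLength_mul (x : α → ℝ) {l : List α} {i j : α}
    (hi : l.head? = some i) (hj : l.getLast? = some j) (hq : ∀ e ∈ l.zip l.tail, 0 < q e) :
    (x i - x j) ^ 2 ≤ pathLength q l * pathEnergy q x l := by
  obtain ⟨l', hnd, hhead, hlast, hsub⟩ := l.exists_nodup_zip_tail_sublist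
  have hq' : ∀ e ∈ l'.zip l'.tail, 0 < q e := fun e he => hq e (hsub.subset he)
  calc (x i - x j) ^ 2
      ≤ pathLength q l' * pathEnergy q x l' :=
        sq_sub_le_pathLength_mul_of_nodup x hnd.zip_tail (hhead.trans hi) (hlast.trans hj) hq'
    _ ≤ pathLength q l * pathEnergy q x l := by
        refine mul_le_mul (pathLength_le_of_sublist hsub fun e he => (hq e he).le)
          (sum_le_sum_of_subset_of_nonneg ?_ fun e he _ => ?_)
          (pathEnergy_nonneg x fun e he => (hq' e he).le)
          (pathLength_nonneg fun e he => (hq e he).le)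
        · exact fun e he => List.mem_toFinset.2 (hsub.subset (List.mem_toFinset.1 he))
        · exact mul_nonneg (hq e (List.mem_toFinset.1 he)).le (sq_nonneg _)

end PathLength

section PathFamily

variable {α : Type*} [Fintype α] [DecidableEq α] {q : α × α → ℝ} {Γ : Finset (List α)}

theorem sum_inv_pathLength_mul_sq_sub_le (hq : ∀ e, 0 ≤ q e) (x : α → ℝ) {i j : α}
    (hΓ : ∀ γ ∈ Γ, γ.head? = some i ∧ γ.getLast? = some j ∧
      ∀ e ∈ γ.zip γ.tail, 0 < q e)
    (hdisj : (Γ : Set (List α)).PairwiseDisjoint fun γ => (γ.zip γ.tail).toFinset) :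
    (∑ γ ∈ Γ, (pathLength q γ)⁻¹) * (x i - x j) ^ 2 ≤
      ∑ e, q e * (x e.1 - x e.2) ^ 2 :=
  calc (∑ γ ∈ Γ, (pathLength q γ)⁻¹) * (x i - x j) ^ 2
      = ∑ γ ∈ Γ, (pathLength q γ)⁻¹ * (x i - x j) ^ 2 := sum_mul _ _ _
    _ ≤ ∑ γ ∈ Γ, pathEnergy q x γ := by
        refine sum_le_sum fun γ hγ => ?_
        obtain ⟨hi, hj, hqγ⟩ := hΓ γ hγ
        exact inv_mul_le_of_le_mul₀ (pathLength_nonneg fun e _ => hq e)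
          (pathEnergy_nonneg x fun e _ => hq e) (sq_sub_le_pathLength_mul x hi hj hqγ)
    _ = ∑ e ∈ Γ.biUnion fun γ => (γ.zip γ.tail).toFinset, q e * (x e.1 - x e.2) ^ 2 :=
        (sum_biUnion hdisj).symm
    _ ≤ ∑ e, q e * (x e.1 - x e.2) ^ 2 :=
        sum_le_sum_of_subset_of_nonneg (subset_univ _)
          fun e _ _ => mul_nonneg (hq e) (sq_nonneg _)

theorem sum_inv_pathLength_le {i : α} (hq : ∀ v, 0 ≤ q (i, v))
    (hΓ : ∀ γ ∈ Γ, γ.head? = some i ∧ 2 ≤ γ.length ∧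
      ∀ e ∈ γ.zip γ.tail, 0 < q e)
    (hdisj : (Γ : Set (List α)).PairwiseDisjoint fun γ => (γ.zip γ.tail).toFinset) :
    ∑ γ ∈ Γ, (pathLength q γ)⁻¹ ≤ ∑ v, q (i, v) := by
  have hfirst : ∀ γ ∈ Γ, (i, γ.getD 1 i) ∈ γ.zip γ.tail :=
    fun γ hγ => List.mem_zip_tail_getD_one (hΓ γ hγ).1 (hΓ γ hγ).2.1
  -- distinct paths of an edge-disjoint family leave `i` through distinct edges
  have hinj : Set.InjOn (fun γ : List α => γ.getD 1 i) Γ := by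
    intro γ₁ h₁ γ₂ h₂ heq
    by_contra hne
    refine Finset.disjoint_left.1 (hdisj h₁ h₂ hne) (List.mem_toFinset.2 (hfirst γ₁ h₁)) ?_
    simpa only [heq] using List.mem_toFinset.2 (hfirst γ₂ h₂)
  calc ∑ γ ∈ Γ, (pathLength q γ)⁻¹
      ≤ ∑ γ ∈ Γ, q (i, γ.getD 1 i) :=
        sum_le_sum fun γ hγ => inv_pathLength_le (hfirst γ hγ) (hΓ γ hγ).2.2
    _ = ∑ v ∈ Γ.image fun γ => γ.getD 1 i, q (i, v) :=
        (sum_image (f := fun v => q (i, v)) hinj).symm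
    _ ≤ ∑ v, q (i, v) := sum_le_sum_of_subset_of_nonneg (subset_univ _) fun v _ _ => hq v

end PathFamily

section Spectral

variable {ι : Type*} [Fintype ι] (π : ι → ℝ) (P : Matrix ι ι ℝ)

-- A sum over ordered pairs: twice the usual Dirichlet form.
noncomputable def dirichletForm (x : ι → ℝ) : ℝ :=
  ∑ i, ∑ j, π i * P i j * (x i - x j) ^ 2

variable {π P}

theorem dirichletForm_nonneg (hπ : ∀ i, 0 ≤ π i) (hP : ∀ i j, 0 ≤ P i j)
    (x : ι → ℝ) : 0 ≤ dirichletForm π P x :=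
  sum_nonneg fun i _ => sum_nonneg fun j _ =>
    mul_nonneg (mul_nonneg (hπ i) (hP i j)) (sq_nonneg _)

theorem dirichletForm_eq (hrow : ∀ i, ∑ j, P i j = 1)
    (hrev : ∀ i j, π i * P i j = π j * P j i) (x : ι → ℝ) :
    dirichletForm π P x = 2 * (∑ i, π i * x i ^ 2 - ∑ i, π i * x i * (P *ᵥ x) i) := by
  have hrows : ∑ i, ∑ j, π i * P i j * x i ^ 2 = ∑ i, π i * x i ^ 2 := by
    refine sum_congr rfl fun i _ => ?_
    rw [← sum_mul, ← mul_sum, hrow, mul_one]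
  have hcols : ∑ i, ∑ j, π i * P i j * x j ^ 2 = ∑ i, ∑ j, π i * P i j * x i ^ 2 := by
    rw [sum_comm]
    exact sum_congr rfl fun i _ => sum_congr rfl fun j _ => by rw [hrev]
  have hcross : ∑ i, ∑ j, π i * P i j * (x i * x j) = ∑ i, π i * x i * (P *ᵥ x) i := by
    refine sum_congr rfl fun i _ => ?_
    simp only [mulVec, dotProduct, mul_sum]
    exact sum_congr rfl fun j _ => by ring
  have hexpand : ∀ i j, π i * P i j * (x i - x j) ^ 2 =
      π i * P i j * x i ^ 2 + π i * P i j * x j ^ 2 - 2 * (π i * P i j * (x i * x j)) := by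
    intros; ring
  simp only [dirichletForm, hexpand, sum_add_distrib, sum_sub_distrib, ← mul_sum, hcols, hrows,
    hcross]
  ring

theorem sum_sum_mul_mul_sub_sq (w x : ι → ℝ) :
    ∑ i, ∑ j, w i * w j * (x i - x j) ^ 2 =
      2 * ((∑ i, w i) * ∑ i, w i * x i ^ 2 - (∑ i, w i * x i) ^ 2) := by
  have hexpand : ∀ i j, w i * w j * (x i - x j) ^ 2 =
      w j * (w i * x i ^ 2) + w i * (w j * x j ^ 2) - 2 * (w i * x i * (w j * x j)) := by
    intros; ring
  simp only [hexpand, sum_add_distrib, sum_sub_distrib, ← mul_sum, ← sum_mul]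
  ring

theorem le_one_sub_inv_of_sq_sub_le (hπ : ∀ i, 0 < π i) (hπsum : ∑ i, π i = 1)
    (hrow : ∀ i, ∑ j, P i j = 1) (hrev : ∀ i j, π i * P i j = π j * P j i) {κ lam : ℝ}
    (hκ : 0 < κ) {x : ι → ℝ} (hx : x ≠ 0) (horth : ∑ i, π i * x i = 0)
    (heig : P *ᵥ x = lam • x) (hpair : ∀ i j, (x i - x j) ^ 2 ≤ κ * dirichletForm π P x) :
    lam ≤ 1 - 1 / κ := by
  set V := ∑ i, π i * x i ^ 2
  have hV : 0 < V := by
    obtain ⟨i, hi⟩ := Function.ne_iff.1 hx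
    exact sum_pos' (fun k _ => mul_nonneg (hπ k).le (sq_nonneg _))
      ⟨i, mem_univ i, mul_pos (hπ i) (sq_pos_iff.2 hi)⟩
  have hE : dirichletForm π P x = 2 * (1 - lam) * V := by
    have hquad : ∑ i, π i * x i * (lam • x) i = lam * V := by
      rw [mul_sum]
      exact sum_congr rfl fun i _ => by simp only [Pi.smul_apply, smul_eq_mul]; ring
    rw [dirichletForm_eq hrow hrev, heig, hquad]
    ring
  have hpoincare : 2 * V ≤ κ * dirichletForm π P x :=
    calc 2 * V = ∑ i, ∑ j, π i * π j * (x i - x j) ^ 2 := by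
          rw [sum_sum_mul_mul_sub_sq, hπsum, horth]; ring
      _ ≤ ∑ i, ∑ j, π i * π j * (κ * dirichletForm π P x) := by
          gcongr with i _ j _
          · exact mul_nonneg (hπ i).le (hπ j).le
          · exact hpair i j
      _ = κ * dirichletForm π P x := by
          simp only [← sum_mul, ← mul_sum, hπsum, one_mul, mul_one]
  rw [hE] at hpoincare
  have : 1 ≤ κ * (1 - lam) := by nlinarith
  rw [le_sub_comm, div_le_iff₀ hκ]
  linarith

end Spectral

section KappaBound

variable {n : ℕ} {π : Fin n → ℝ} {P : Matrix (Fin n) (Fin n) ℝ}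
  {Γ : Finset (List (Fin n))} {i j : Fin n}

theorem EdgeDisjointFamily.pairwiseDisjoint (h : EdgeDisjointFamily Γ) :
    (Γ : Set (List (Fin n))).PairwiseDisjoint fun γ => (γ.zip γ.tail).toFinset :=
  fun γ₁ h₁ γ₂ h₂ hne => disjoint_left.2 fun e he₁ he₂ =>
    h γ₁ h₁ γ₂ h₂ hne e (List.mem_toFinset.1 he₁) (List.mem_toFinset.1 he₂)

theorem IsPathFrom.weight_pos (hπ : ∀ i, 0 < π i) {γ : List (Fin n)} (h : IsPathFrom P i j γ) :
    ∀ e ∈ γ.zip γ.tail, 0 < π e.1 * P e.1 e.2 :=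
  fun e he => mul_pos (hπ e.1) (h.2.2.2 e he)

theorem sum_inv_plen_pos (hπ : ∀ i, 0 < π i) (hne : Γ.Nonempty)
    (hpath : ∀ γ ∈ Γ, IsPathFrom P i j γ) : 0 < ∑ γ ∈ Γ, (plen π P γ)⁻¹ := by
  obtain ⟨γ, hγ⟩ := hne
  refine sum_pos' (fun γ hγ => inv_nonneg.2 ?_) ⟨γ, hγ, inv_pos.2 ?_⟩
  · exact pathLength_nonneg fun e he => ((hpath γ hγ).weight_pos hπ e he).le
  · exact pathLength_pos (List.mem_zip_tail_getD_one (hpath γ hγ).1 (hpath γ hγ).2.2.1)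
      ((hpath γ hγ).weight_pos hπ)

theorem sum_inv_plen_le_one (hP : IsStochastic P) (hπ : ∀ i, 0 < π i) (hπsum : ∑ i, π i = 1)
    (hpath : ∀ γ ∈ Γ, IsPathFrom P i j γ) (hdisj : EdgeDisjointFamily Γ) :
    ∑ γ ∈ Γ, (plen π P γ)⁻¹ ≤ 1 :=
  calc ∑ γ ∈ Γ, (plen π P γ)⁻¹
      ≤ ∑ v, π i * P i v :=
        sum_inv_pathLength_le (fun v => mul_nonneg (hπ i).le (hP.1 i v))
          (fun γ hγ => ⟨(hpath γ hγ).1, (hpath γ hγ).2.2.1, (hpath γ hγ).weight_pos hπ⟩)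
          hdisj.pairwiseDisjoint
    _ = π i := by rw [← mul_sum, hP.2 i, mul_one]
    _ ≤ 1 := hπsum ▸ single_le_sum (fun k _ => (hπ k).le) (mem_univ i)

theorem sq_sub_le_inv_sum_inv_plen_mul (hP : ∀ i j, 0 ≤ P i j) (hπ : ∀ i, 0 < π i)
    (hne : Γ.Nonempty) (hpath : ∀ γ ∈ Γ, IsPathFrom P i j γ) (hdisj : EdgeDisjointFamily Γ)
    (x : Fin n → ℝ) :
    (x i - x j) ^ 2 ≤ (∑ γ ∈ Γ, (plen π P γ)⁻¹)⁻¹ * dirichletForm π P x := by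
  rw [inv_mul_eq_div, le_div_iff₀ (sum_inv_plen_pos hπ hne hpath), mul_comm, dirichletForm,
    ← Fintype.sum_prod_type']
  exact sum_inv_pathLength_mul_sq_sub_le (fun e => mul_nonneg (hπ e.1).le (hP e.1 e.2)) x
    (fun γ hγ => ⟨(hpath γ hγ).1, (hpath γ hγ).2.1, (hpath γ hγ).weight_pos hπ⟩)
    hdisj.pairwiseDisjoint

end KappaBound

theorem lambda2_le_kappa_bound_general {n : ℕ} (hn : 2 ≤ n) (P : Matrix (Fin n) (Fin n) ℝ)
    (π : Fin n → ℝ)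
    (hP : IsStochastic P)
    (hπpos : ∀ i, 0 < π i) (hπsum : ∑ i, π i = 1)
    (hrev : IsReversible π P)
    (Γ : Fin n → Fin n → Finset (List (Fin n)))
    (hΓne : ∀ i j, i ≠ j → (Γ i j).Nonempty)
    (hΓpath : ∀ i j, i ≠ j → ∀ γ ∈ Γ i j, IsPathFrom P i j γ)
    (hΓdisj : ∀ i j, i ≠ j → EdgeDisjointFamily (Γ i j))
    (κ : ℝ)
    (hκ : κ = sSup {c : ℝ | ∃ i j, i ≠ j ∧
      c = (∑ γ ∈ Γ i j, (plen π P γ)⁻¹)⁻¹}) :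
    lambda2 π P ≤ 1 - 1 / κ := by
  set c : Fin n → Fin n → ℝ := fun i j => (∑ γ ∈ Γ i j, (plen π P γ)⁻¹)⁻¹
  have hc_le : ∀ i j, i ≠ j → c i j ≤ κ := by
    have hbdd : BddAbove {c' : ℝ | ∃ i j, i ≠ j ∧ c' = c i j} :=
      ((Set.finite_range (Function.uncurry c)).subset
        (by rintro _ ⟨i, j, -, rfl⟩; exact ⟨(i, j), rfl⟩)).bddAbove
    intro i j hij
    rw [hκ]
    exact le_csSup hbdd ⟨i, j, hij, rfl⟩
  have hc_one : ∀ i j, i ≠ j → 1 ≤ c i j := fun i j hij =>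
    one_le_inv_iff₀.2 ⟨sum_inv_plen_pos hπpos (hΓne i j hij) (hΓpath i j hij),
      sum_inv_plen_le_one hP hπpos hπsum (hΓpath i j hij) (hΓdisj i j hij)⟩
  have h01 : (⟨0, by omega⟩ : Fin n) ≠ ⟨1, by omega⟩ := by simp [Fin.ext_iff]
  have hκ1 : 1 ≤ κ := (hc_one _ _ h01).trans (hc_le _ _ h01)
  have hE : ∀ x, 0 ≤ dirichletForm π P x := dirichletForm_nonneg (fun i => (hπpos i).le) hP.1
  -- `Real.sSup_le` needs a nonnegative bound: `lambda2 π P = sSup ∅ = 0` when no eigenvalue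
  -- qualifies.
  refine Real.sSup_le ?_ (sub_nonneg.2 ((div_le_one (by linarith)).2 hκ1))
  rintro lam ⟨x, hx, horth, heig⟩
  refine le_one_sub_inv_of_sq_sub_le hπpos hπsum hP.2 hrev (by linarith) hx horth heig
    fun i j => ?_
  rcases eq_or_ne i j with rfl | hij
  · simpa using mul_nonneg (by linarith : (0 : ℝ) ≤ κ) (hE x)
  · exact (sq_sub_le_inv_sum_inv_plen_mul hP.1 hπpos (hΓne i j hij) (hΓpath i j hij)
      (hΓdisj i j hij) x).trans (mul_le_mul_of_nonneg_right (hc_le i j hij) (hE x))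

theorem lambda2_le_kappa_bound {n : ℕ} (hn : 2 ≤ n) (P : Matrix (Fin n) (Fin n) ℝ)
    (π : Fin n → ℝ)
    (hP : IsStochastic P) (hirr : IsIrreducibleM P)
    (hπpos : ∀ i, 0 < π i) (hπsum : ∑ i, π i = 1)
    (hrev : IsReversible π P)
    (Γ : Fin n → Fin n → Finset (List (Fin n)))
    (hΓne : ∀ i j, i ≠ j → (Γ i j).Nonempty)
    (hΓpath : ∀ i j, i ≠ j → ∀ γ ∈ Γ i j, IsPathFrom P i j γ)
    (hΓdisj : ∀ i j, i ≠ j → EdgeDisjointFamily (Γ i j))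
    (κ : ℝ)
    (hκ : κ = sSup {c : ℝ | ∃ i j, i ≠ j ∧
      c = (∑ γ ∈ Γ i j, (plen π P γ)⁻¹)⁻¹}) :
    lambda2 π P ≤ 1 - 1 / κ :=
  lambda2_le_kappa_bound_general hn P π hP hπpos hπsum hrev Γ hΓne hΓpath hΓdisj κ hκ
end

section
/- Let P be a reversible stochastic matrix whose associated graph G_P has normalized diameter δ_*(G_P) = min_{k≥1} δ_k(G_P)/k, where δ_k is the k-diameter, and let α(P) = min over edges (i,j) of G_P of π_i P_{ij}. Then every eigenvalue of P other than 1 is at most 1 − α(P)/δ_*(G_P). -/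
open Finset Matrix ENNReal

/-- The `k`-distance `d_k(i,j)`: the minimum, over sets of `k` pairwise edge-disjoint
paths from `i` to `j`, of the maximum length of a path in the set (`∞` if none exists). -/
noncomputable def kDist {n : ℕ} (P : Matrix (Fin n) (Fin n) ℝ) (k : ℕ)
    (i j : Fin n) : ℝ≥0∞ :=
  sInf {D : ℝ≥0∞ | ∃ Γ : Finset (List (Fin n)), Γ.card = k ∧
    (∀ γ ∈ Γ, IsPathFrom P i j γ) ∧ EdgeDisjointFamily Γ ∧
    D = Γ.sup (fun γ => ((γ.length - 1 : ℕ) : ℝ≥0∞))}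

/-- The `k`-diameter `δ_k(G_P)`. -/
noncomputable def kDiam {n : ℕ} (P : Matrix (Fin n) (Fin n) ℝ) (k : ℕ) : ℝ≥0∞ :=
  sSup {D : ℝ≥0∞ | ∃ i j : Fin n, i ≠ j ∧ D = kDist P k i j}

/-- The normalized diameter `δ_*(G_P) = min_{k ≥ 1} δ_k(G_P)/k`. -/
noncomputable def normDiam {n : ℕ} (P : Matrix (Fin n) (Fin n) ℝ) : ℝ≥0∞ :=
  ⨅ (k : ℕ) (_ : 1 ≤ k), kDiam P k / (k : ℝ≥0∞)

/-- `α(P) = min over edges (i,j) of π_i P_{ij}`. -/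
noncomputable def alphaP {n : ℕ} (π : Fin n → ℝ) (P : Matrix (Fin n) (Fin n) ℝ) : ℝ :=
  sInf {a : ℝ | ∃ i j, 0 < P i j ∧ a = π i * P i j}

/-!
Let `P x = l x` with `x ≠ 0`, `l ≠ 1`. Since `π` is stationary, `x` is `π`-centred, so the
Dirichlet form `∑ π_i P_ij (x_i - x_j)²` equals `2 (1 - l) Var_π x`, while
`∑ π_i π_j (x_i - x_j)² = 2 Var_π x`.
Fix `k`. Joining each pair `i ≠ j` by `k` edge-disjoint paths of length at most `δ_k` and applying
Cauchy–Schwarz along every path gives `k (x_i - x_j)² ≤ δ_k ∑_{(u,v) ∈ E} (x_u - x_v)²`, and this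
unweighted edge sum is at most `α(P)⁻¹` times the Dirichlet form. Averaging over `π ⊗ π` yields
`α(P) ≤ (1 - l) δ_k / k` for every `k`, hence `α(P) ≤ (1 - l) δ_*`.
-/

namespace List
variable {V : Type*}

theorem consecutivePairs_suffix_cons (a : V) (l : List V) :
    l.consecutivePairs <:+ (a :: l).consecutivePairs := by
  cases l <;> simp [consecutivePairs]

theorem IsSuffix.consecutivePairs {l₁ l₂ : List V} (h : l₁ <:+ l₂) :
    l₁.consecutivePairs <:+ l₂.consecutivePairs := by
  obtain ⟨u, rfl⟩ := h
  induction u with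
  | nil => exact suffix_refl _
  | cons a u ih => exact ih.trans (consecutivePairs_suffix_cons a _)

theorem Nodup.consecutivePairs {l : List V} (hl : l.Nodup) : l.consecutivePairs.Nodup :=
  Nodup.of_map Prod.snd <| by
    rw [map_snd_zip (by simp)]
    exact hl.sublist (tail_sublist l)

theorem sum_map_consecutivePairs_sub {G : Type*} [AddCommGroup G] (f : V → G) :
    ∀ {l : List V} {i j : V}, l.head? = some i → l.getLast? = some j →
      (l.consecutivePairs.map fun e => f e.1 - f e.2).sum = f i - f j
  | [], _, _, h, _ => by simp at h
  | [a], _, _, hi, hj => by simp_all [consecutivePairs]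
  | a :: b :: t, i, j, hi, hj => by
    rw [getLast?_cons_cons] at hj
    simp only [head?_cons, Option.some_inj] at hi
    subst hi
    have ih := sum_map_consecutivePairs_sub f (l := b :: t) rfl hj
    simp only [consecutivePairs, tail_cons, zip_cons_cons, map_cons, sum_cons] at ih ⊢
    rw [ih]; abel

theorem exists_nodup_subwalk [DecidableEq V] (l : List V) :
    ∃ l' : List V, l'.Nodup ∧ l'.head? = l.head? ∧ l'.getLast? = l.getLast? ∧ l' ⊆ l ∧
      l'.consecutivePairs ⊆ l.consecutivePairs := by
  induction l with
  | nil => exact ⟨[], by simp⟩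
  | cons a m ih =>
    obtain ⟨m', hnd, hhead, hlast, hsub, hpairs⟩ := ih
    by_cases ha : a ∈ m'
    · obtain ⟨s, t, rfl⟩ := append_of_mem ha
      have hsuf : a :: t <:+ s ++ a :: t := suffix_append s _
      refine ⟨a :: t, hnd.sublist hsuf.sublist, rfl, ?_, ?_, ?_⟩
      · simp [getLast?_cons, ← hlast, getLast?_append]
      · exact Subset.trans hsuf.subset (Subset.trans hsub (subset_cons_self a m))
      · exact Subset.trans hsuf.consecutivePairs.subset
          (Subset.trans hpairs (consecutivePairs_suffix_cons a m).subset)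
    · refine ⟨a :: m', nodup_cons.2 ⟨ha, hnd⟩, rfl, ?_, cons_subset_cons a hsub, ?_⟩
      · simp [getLast?_cons, hlast]
      · cases m' with
        | nil => simp [consecutivePairs]
        | cons b t =>
          cases m with
          | nil => simp at hhead
          | cons c u =>
            simp only [head?_cons, Option.some_inj] at hhead
            subst hhead
            simp only [consecutivePairs, tail_cons, zip_cons_cons, cons_subset, mem_cons,
              true_or, true_and]
            exact Subset.trans hpairs (subset_cons_self _ _)

theorem sq_sub_le_mul_sum_sq [DecidableEq V] (f : V → ℝ) {l : List V} {i j : V}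
    (hi : l.head? = some i) (hj : l.getLast? = some j) :
    (f i - f j) ^ 2 ≤
      (l.length - 1 : ℕ) * ∑ e ∈ l.consecutivePairs.toFinset, (f e.1 - f e.2) ^ 2 := by
  -- A walk may repeat edges; its loop erasure telescopes with distinct edges.
  obtain ⟨l', hnd, hhead, hlast, hsub, hpairs⟩ := l.exists_nodup_subwalk
  set S := l'.consecutivePairs.toFinset
  have htelescope : ∑ e ∈ S, (f e.1 - f e.2) = f i - f j := by
    rw [sum_toFinset _ hnd.consecutivePairs]
    exact sum_map_consecutivePairs_sub f (hhead.trans hi) (hlast.trans hj)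
  have hcard : #S ≤ l.length - 1 := by
    rw [toFinset_card_of_nodup hnd.consecutivePairs, length_zip, length_tail]
    have := (hnd.subperm hsub).length_le
    omega
  calc (f i - f j) ^ 2 = (∑ e ∈ S, (f e.1 - f e.2)) ^ 2 := by rw [htelescope]
    _ ≤ #S * ∑ e ∈ S, (f e.1 - f e.2) ^ 2 := sq_sum_le_card_mul_sum_sq
    _ ≤ (l.length - 1 : ℕ) * ∑ e ∈ l.consecutivePairs.toFinset, (f e.1 - f e.2) ^ 2 := by
      refine mul_le_mul (by exact_mod_cast hcard) ?_ (Finset.sum_nonneg fun e _ => sq_nonneg _)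
        (Nat.cast_nonneg _)
      refine Finset.sum_le_sum_of_subset_of_nonneg (fun e he => ?_) fun _ _ _ => sq_nonneg _
      exact mem_toFinset.2 (hpairs (mem_toFinset.1 he))

end List

theorem IsReversible.vecMul_eq {n : ℕ} {π : Fin n → ℝ} {P : Matrix (Fin n) (Fin n) ℝ}
    (hrev : IsReversible π P) (hrow : ∀ i, ∑ j, P i j = 1) : π ᵥ* P = π :=
  funext fun j => by simp [vecMul, dotProduct, hrev _ j, ← Finset.mul_sum, hrow]

theorem dotProduct_eq_zero_of_mulVec_eq_smul {ι : Type*} [Fintype ι] {π x : ι → ℝ}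
    {P : Matrix ι ι ℝ} {l : ℝ} (hstat : π ᵥ* P = π) (hPx : P *ᵥ x = l • x) (hl : l ≠ 1) :
    π ⬝ᵥ x = 0 := by
  have h : l * (π ⬝ᵥ x) = π ⬝ᵥ x := by
    rw [← smul_eq_mul, ← dotProduct_smul, ← hPx, dotProduct_mulVec, hstat]
  exact (mul_eq_zero.1 (by linarith : (l - 1) * (π ⬝ᵥ x) = 0)).resolve_left (sub_ne_zero.2 hl)

theorem sum_sum_mul_sq_sub_eq {ι : Type*} [Fintype ι] {π x : ι → ℝ} {P : Matrix ι ι ℝ} {l : ℝ}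
    (hrow : ∀ i, ∑ j, P i j = 1) (hstat : π ᵥ* P = π) (hPx : P *ᵥ x = l • x) :
    ∑ i, ∑ j, π i * P i j * (x i - x j) ^ 2 = 2 * (1 - l) * ∑ i, π i * x i ^ 2 := by
  have hrowx : ∀ i, ∑ j, P i j * x j = l * x i := fun i => by
    simpa [mulVec, dotProduct] using congrFun hPx i
  have hcol : ∀ j, ∑ i, π i * P i j = π j := fun j => by
    simpa [vecMul, dotProduct] using congrFun hstat j
  have hexpand : ∀ i j, π i * P i j * (x i - x j) ^ 2 =
      π i * x i ^ 2 * P i j - 2 * (π i * x i) * (P i j * x j) + π i * P i j * x j ^ 2 :=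
    fun i j => by ring
  calc ∑ i, ∑ j, π i * P i j * (x i - x j) ^ 2
      = ∑ i, (π i * x i ^ 2 * ∑ j, P i j - 2 * (π i * x i) * ∑ j, P i j * x j) +
          ∑ j, (∑ i, π i * P i j) * x j ^ 2 := by
        simp only [hexpand, Finset.sum_add_distrib, Finset.sum_sub_distrib, ← Finset.mul_sum]
        rw [Finset.sum_comm (f := fun i j => π i * P i j * x j ^ 2)]
        simp only [← Finset.sum_mul]
    _ = ∑ i, (π i * x i ^ 2 - 2 * (π i * x i) * (l * x i)) + ∑ j, π j * x j ^ 2 := by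
        simp only [hrow, hrowx, hcol, mul_one]
    _ = 2 * (1 - l) * ∑ i, π i * x i ^ 2 := by
        rw [Finset.mul_sum, ← Finset.sum_add_distrib]
        exact Finset.sum_congr rfl fun i _ => by ring

theorem sum_sum_mul_mul_sq_sub {ι : Type*} [Fintype ι] (π x : ι → ℝ) :
    ∑ i, ∑ j, π i * π j * (x i - x j) ^ 2 =
      2 * ((∑ i, π i) * ∑ i, π i * x i ^ 2 - (∑ i, π i * x i) ^ 2) := by
  have hexpand : ∀ i j, π i * π j * (x i - x j) ^ 2 =
      π j * (π i * x i ^ 2) - 2 * (π i * x i) * (π j * x j) + π i * (π j * x j ^ 2) :=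
    fun i j => by ring
  simp only [hexpand, Finset.sum_add_distrib, Finset.sum_sub_distrib, ← Finset.mul_sum,
    ← Finset.sum_mul]
  ring

theorem sum_mul_sq_pos {ι : Type*} [Fintype ι] {π x : ι → ℝ} (hπ : ∀ i, 0 < π i) (hx : x ≠ 0) :
    0 < ∑ i, π i * x i ^ 2 := by
  obtain ⟨i, hi⟩ := Function.ne_iff.1 hx
  exact Finset.sum_pos' (fun j _ => mul_nonneg (hπ j).le (sq_nonneg _))
    ⟨i, Finset.mem_univ _, _root_.mul_pos (hπ i) (sq_pos_of_ne_zero hi)⟩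

noncomputable def edgeEnergy {n : ℕ} (P : Matrix (Fin n) (Fin n) ℝ) (x : Fin n → ℝ) : ℝ :=
  ∑ e : Fin n × Fin n with 0 < P e.1 e.2, (x e.1 - x e.2) ^ 2

theorem edgeEnergy_nonneg {n : ℕ} (P : Matrix (Fin n) (Fin n) ℝ) (x : Fin n → ℝ) :
    0 ≤ edgeEnergy P x :=
  Finset.sum_nonneg fun _ _ => sq_nonneg _

theorem alphaP_le {n : ℕ} {π : Fin n → ℝ} {P : Matrix (Fin n) (Fin n) ℝ} {i j : Fin n}
    (h : 0 < P i j) : alphaP π P ≤ π i * P i j := by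
  refine csInf_le (Set.Finite.bddBelow ?_) ⟨i, j, h, rfl⟩
  refine (Set.finite_range fun e : Fin n × Fin n => π e.1 * P e.1 e.2).subset ?_
  rintro _ ⟨i, j, -, rfl⟩
  exact ⟨(i, j), rfl⟩

theorem alphaP_nonneg {n : ℕ} {π : Fin n → ℝ} (hπ : ∀ i, 0 ≤ π i) (P : Matrix (Fin n) (Fin n) ℝ) :
    0 ≤ alphaP π P :=
  Real.sInf_nonneg fun _ ⟨i, _, h, ha⟩ => ha ▸ mul_nonneg (hπ i) h.le

theorem alphaP_mul_edgeEnergy_le {n : ℕ} {π : Fin n → ℝ} {P : Matrix (Fin n) (Fin n) ℝ}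
    (hπ : ∀ i, 0 ≤ π i) (hP : ∀ i j, 0 ≤ P i j) (x : Fin n → ℝ) :
    alphaP π P * edgeEnergy P x ≤ ∑ i, ∑ j, π i * P i j * (x i - x j) ^ 2 :=
  calc alphaP π P * edgeEnergy P x
      = ∑ e : Fin n × Fin n with 0 < P e.1 e.2, alphaP π P * (x e.1 - x e.2) ^ 2 :=
        Finset.mul_sum _ _ _
    _ ≤ ∑ e : Fin n × Fin n with 0 < P e.1 e.2, π e.1 * P e.1 e.2 * (x e.1 - x e.2) ^ 2 :=
        Finset.sum_le_sum fun _ he =>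
          mul_le_mul_of_nonneg_right (alphaP_le (Finset.mem_filter.1 he).2) (sq_nonneg _)
    _ ≤ ∑ e : Fin n × Fin n, π e.1 * P e.1 e.2 * (x e.1 - x e.2) ^ 2 :=
        Finset.sum_le_sum_of_subset_of_nonneg (Finset.filter_subset _ _) fun e _ _ =>
          mul_nonneg (mul_nonneg (hπ e.1) (hP e.1 e.2)) (sq_nonneg _)
    _ = ∑ i, ∑ j, π i * P i j * (x i - x j) ^ 2 := Fintype.sum_prod_type _

theorem card_mul_sq_sub_le_mul_edgeEnergy {n : ℕ} {P : Matrix (Fin n) (Fin n) ℝ}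
    (x : Fin n → ℝ) {i j : Fin n} {Γ : Finset (List (Fin n))}
    (hpath : ∀ γ ∈ Γ, IsPathFrom P i j γ) (hdisj : EdgeDisjointFamily Γ) {L : ℝ} (hL0 : 0 ≤ L)
    (hL : ∀ γ ∈ Γ, ((γ.length - 1 : ℕ) : ℝ) ≤ L) :
    #Γ * (x i - x j) ^ 2 ≤ L * edgeEnergy P x := by
  have hdisj' : (Γ : Set (List (Fin n))).PairwiseDisjoint
      fun γ => γ.consecutivePairs.toFinset := fun γ₁ h₁ γ₂ h₂ hne =>
    Finset.disjoint_left.2 fun e he₁ he₂ =>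
      hdisj γ₁ h₁ γ₂ h₂ hne e (List.mem_toFinset.1 he₁) (List.mem_toFinset.1 he₂)
  calc #Γ * (x i - x j) ^ 2 = ∑ γ ∈ Γ, (x i - x j) ^ 2 := by simp
    _ ≤ ∑ γ ∈ Γ, L * ∑ e ∈ γ.consecutivePairs.toFinset, (x e.1 - x e.2) ^ 2 := by
      refine Finset.sum_le_sum fun γ hγ => ?_
      exact (List.sq_sub_le_mul_sum_sq x (hpath γ hγ).1 (hpath γ hγ).2.1).trans
        (mul_le_mul_of_nonneg_right (hL γ hγ) (Finset.sum_nonneg fun e _ => sq_nonneg _))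
    _ = L * ∑ e ∈ Γ.biUnion fun γ => γ.consecutivePairs.toFinset, (x e.1 - x e.2) ^ 2 := by
      rw [Finset.sum_biUnion hdisj', Finset.mul_sum]
    _ ≤ L * edgeEnergy P x := by
      gcongr
      refine Finset.sum_le_sum_of_subset_of_nonneg (fun e he => ?_) fun _ _ _ => sq_nonneg _
      obtain ⟨γ, hγ, he⟩ := Finset.mem_biUnion.1 he
      exact Finset.mem_filter.2 ⟨Finset.mem_univ _, (hpath γ hγ).2.2.2 e (List.mem_toFinset.1 he)⟩

theorem ENNReal.sInf_mem_of_subset_range_natCast {s : Set ℝ≥0∞} (h : sInf s ≠ ⊤)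
    (hs : s ⊆ Set.range ((↑) : ℕ → ℝ≥0∞)) : sInf s ∈ s := by
  have ht : ((↑) ⁻¹' s : Set ℕ).Nonempty := by
    have hne : s.Nonempty := Set.nonempty_iff_ne_empty.2 fun he => h (by rw [he, sInf_empty])
    obtain ⟨D, hD⟩ := hne
    obtain ⟨m, rfl⟩ := hs hD
    exact ⟨m, hD⟩
  have hleast : IsLeast s (sInf ((↑) ⁻¹' s : Set ℕ) : ℕ) := by
    refine ⟨Nat.sInf_mem ht, fun D hD => ?_⟩
    obtain ⟨m, rfl⟩ := hs hD
    exact_mod_cast Nat.sInf_le hD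
  exact hleast.csInf_eq ▸ hleast.1

theorem exists_edgeDisjointFamily_of_kDist_ne_top {n : ℕ} {P : Matrix (Fin n) (Fin n) ℝ} {k : ℕ}
    {i j : Fin n} (h : kDist P k i j ≠ ⊤) :
    ∃ Γ : Finset (List (Fin n)), #Γ = k ∧ (∀ γ ∈ Γ, IsPathFrom P i j γ) ∧
      EdgeDisjointFamily Γ ∧ ∀ γ ∈ Γ, ((γ.length - 1 : ℕ) : ℝ≥0∞) ≤ kDist P k i j := by
  rw [kDist] at h ⊢
  obtain ⟨Γ, hcard, hpath, hdisj, hD⟩ := ENNReal.sInf_mem_of_subset_range_natCast h (by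
    rintro D ⟨Γ, -, -, -, rfl⟩
    exact ⟨_, Finset.apply_sup_eq_sup_comp_of_linearOrder _ Nat.mono_cast Nat.cast_zero⟩)
  exact ⟨Γ, hcard, hpath, hdisj, fun γ hγ => hD ▸ Finset.le_sup
    (f := fun γ : List (Fin n) => ((γ.length - 1 : ℕ) : ℝ≥0∞)) hγ⟩

theorem mul_sq_sub_le_kDiam_mul_edgeEnergy {n : ℕ} {P : Matrix (Fin n) (Fin n) ℝ} {k : ℕ}
    (hfin : kDiam P k ≠ ⊤) (x : Fin n → ℝ) (i j : Fin n) :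
    k * (x i - x j) ^ 2 ≤ (kDiam P k).toReal * edgeEnergy P x := by
  rcases eq_or_ne i j with rfl | hij
  · simpa using mul_nonneg ENNReal.toReal_nonneg (edgeEnergy_nonneg P x)
  have hle : kDist P k i j ≤ kDiam P k := le_sSup ⟨i, j, hij, rfl⟩
  obtain ⟨Γ, hcard, hpath, hdisj, hlen⟩ :=
    exists_edgeDisjointFamily_of_kDist_ne_top (ne_top_of_le_ne_top hfin hle)
  have := card_mul_sq_sub_le_mul_edgeEnergy x hpath hdisj ENNReal.toReal_nonneg fun γ hγ => by
    have := ENNReal.toReal_mono hfin ((hlen γ hγ).trans hle)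
    rwa [ENNReal.toReal_natCast] at this
  rwa [hcard] at this

theorem sum_sum_mul_mul_sq_sub_le {n : ℕ} {P : Matrix (Fin n) (Fin n) ℝ} {π : Fin n → ℝ}
    (hπ : ∀ i, 0 ≤ π i) (hπsum : ∑ i, π i = 1) {k : ℕ} (hk : 1 ≤ k) (hfin : kDiam P k ≠ ⊤)
    (x : Fin n → ℝ) :
    ∑ i, ∑ j, π i * π j * (x i - x j) ^ 2 ≤ (kDiam P k).toReal / k * edgeEnergy P x := by
  have hk' : (0 : ℝ) < k := by exact_mod_cast hk
  calc ∑ i, ∑ j, π i * π j * (x i - x j) ^ 2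
      ≤ ∑ i, ∑ j, π i * π j * ((kDiam P k).toReal / k * edgeEnergy P x) := by
        gcongr with i _ j _
        · exact mul_nonneg (hπ i) (hπ j)
        · rw [div_mul_eq_mul_div, le_div_iff₀ hk', mul_comm]
          exact mul_sq_sub_le_kDiam_mul_edgeEnergy hfin x i j
    _ = (kDiam P k).toReal / k * edgeEnergy P x := by
      simp [← Finset.sum_mul, ← Finset.mul_sum, hπsum]

theorem le_toReal_normDiam {n : ℕ} {P : Matrix (Fin n) (Fin n) ℝ} {a : ℝ}
    (hfin : normDiam P ≠ ⊤)
    (h : ∀ k, 1 ≤ k → kDiam P k ≠ ⊤ → a ≤ (kDiam P k).toReal / k) :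
    a ≤ (normDiam P).toReal := by
  rw [← ENNReal.ofReal_le_iff_le_toReal hfin]
  refine le_iInf₂ fun k hk => ?_
  rcases eq_or_ne (kDiam P k) ⊤ with htop | htop
  · simp [htop, ENNReal.top_div_of_ne_top]
  · rw [ENNReal.ofReal_le_iff_le_toReal (ENNReal.div_ne_top htop (by simp; omega)),
      ENNReal.toReal_div, ENNReal.toReal_natCast]
    exact h k hk htop

section Eigenvector

variable {n : ℕ} {P : Matrix (Fin n) (Fin n) ℝ} {π x : Fin n → ℝ} {l : ℝ}

theorem lt_one_of_mulVec_eq_smul (hP : IsStochastic P) (hπ : ∀ i, 0 < π i)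
    (hrev : IsReversible π P) (hx : x ≠ 0) (hPx : P *ᵥ x = l • x) (hl : l ≠ 1) : l < 1 := by
  have hV := sum_mul_sq_pos hπ hx
  have hdirichlet : 0 ≤ 2 * (1 - l) * ∑ i, π i * x i ^ 2 :=
    sum_sum_mul_sq_sub_eq hP.2 (hrev.vecMul_eq hP.2) hPx ▸ Finset.sum_nonneg fun i _ =>
      Finset.sum_nonneg fun j _ => mul_nonneg (mul_nonneg (hπ i).le (hP.1 i j)) (sq_nonneg _)
  exact lt_of_le_of_ne (by nlinarith) hl

theorem alphaP_div_one_sub_le (hP : IsStochastic P) (hπ : ∀ i, 0 < π i) (hπsum : ∑ i, π i = 1)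
    (hrev : IsReversible π P) (hx : x ≠ 0) (hPx : P *ᵥ x = l • x) (hl : l ≠ 1) {k : ℕ}
    (hk : 1 ≤ k) (hfin : kDiam P k ≠ ⊤) :
    alphaP π P / (1 - l) ≤ (kDiam P k).toReal / k := by
  have hπ' : ∀ i, 0 ≤ π i := fun i => (hπ i).le
  have hstat := hrev.vecMul_eq hP.2
  set V := ∑ i, π i * x i ^ 2
  have hvariance : ∑ i, ∑ j, π i * π j * (x i - x j) ^ 2 = 2 * V := by
    rw [sum_sum_mul_mul_sq_sub, hπsum,
      show ∑ i, π i * x i = 0 from dotProduct_eq_zero_of_mulVec_eq_smul hstat hPx hl]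
    ring
  have hpoincare := hvariance ▸ sum_sum_mul_mul_sq_sub_le hπ' hπsum hk hfin x
  have hαE := sum_sum_mul_sq_sub_eq hP.2 hstat hPx ▸ alphaP_mul_edgeEnergy_le hπ' hP.1 x
  set D := (kDiam P k).toReal / k
  have hD : 0 ≤ D := by positivity
  rw [div_le_iff₀ (sub_pos.2 (lt_one_of_mulVec_eq_smul hP hπ hrev hx hPx hl))]
  refine le_of_mul_le_mul_right ?_ (mul_pos two_pos (sum_mul_sq_pos hπ hx))
  calc alphaP π P * (2 * V) ≤ alphaP π P * (D * edgeEnergy P x) :=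
        mul_le_mul_of_nonneg_left hpoincare (alphaP_nonneg hπ' P)
    _ = D * (alphaP π P * edgeEnergy P x) := by ring
    _ ≤ D * (2 * (1 - l) * V) := mul_le_mul_of_nonneg_left hαE hD
    _ = D * (1 - l) * (2 * V) := by ring

end Eigenvector

theorem eigenvalue_le_geometric_bound_general {n : ℕ}
    (P : Matrix (Fin n) (Fin n) ℝ) (π : Fin n → ℝ)
    (hP : IsStochastic P)
    (hπpos : ∀ i, 0 < π i) (hπsum : ∑ i, π i = 1)
    (hrev : IsReversible π P) :
    ∀ (l : ℝ) (x : Fin n → ℝ), x ≠ 0 → P.mulVec x = l • x → l ≠ 1 →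
      l ≤ 1 - alphaP π P / (normDiam P).toReal := by
  intro l x hx hPx hl1
  have hl := lt_one_of_mulVec_eq_smul hP hπpos hrev hx hPx hl1
  rcases eq_or_ne (normDiam P) ⊤ with htop | hfin
  · -- `toReal ⊤ = 0` and division by zero is zero, so the claim is just `l ≤ 1`.
    simp [htop, hl.le]
  · have h := le_toReal_normDiam hfin fun k hk hk_fin =>
      alphaP_div_one_sub_le hP hπpos hπsum hrev hx hPx hl1 hk hk_fin
    rw [div_le_iff₀ (sub_pos.2 hl)] at h
    linarith [div_le_of_le_mul₀ ENNReal.toReal_nonneg (sub_pos.2 hl).le (h.trans_eq (mul_comm _ _))]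

theorem eigenvalue_le_geometric_bound {n : ℕ} (hn : 2 ≤ n)
    (P : Matrix (Fin n) (Fin n) ℝ) (π : Fin n → ℝ)
    (hP : IsStochastic P) (hirr : IsIrreducibleM P)
    (hπpos : ∀ i, 0 < π i) (hπsum : ∑ i, π i = 1)
    (hrev : IsReversible π P) :
    ∀ (l : ℝ) (x : Fin n → ℝ), x ≠ 0 → P.mulVec x = l • x → l ≠ 1 →
      l ≤ 1 - alphaP π P / (normDiam P).toReal :=
  eigenvalue_le_geometric_bound_general P π hP hπpos hπsum hrev
end

section
/- Consider a sequence of stochastic matrices A(1), A(2), … of size n, all irreducible with positive diagonals and sharing the same Perron vector π, and the iteration x(t) = A(t) x(t−1). Suppose β < 1 is a uniform upper bound on λ_2(A(t)† A(t)) for all t. Then the variance V(t) = ‖x(t) − (Σ_i π_i x_i(0))·𝟙‖_π² satisfies V(t) ≤ β^t V(0); in particular x(t) converges to (Σ_i π_i x_i(0))·𝟙 and the convergence rate ρ = lim sup ‖x(t) − x*‖^{1/t} satisfies ρ ≤ √β. -/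
/-!
Put `x̄ = Σ π_i x_i(0)` and `y(t) = x(t) - x̄ 𝟙`. Every `A(t)` fixes `𝟙` and has `π` as a left
fixed vector, so `y(t) = A(t) y(t-1)` and `y(t)` stays `π`-orthogonal to `𝟙`. For such `y`,
`‖A y‖²_π = ⟨y, A†A y⟩_π`, where `A†A` is `π`-self-adjoint, positive semidefinite and fixes `𝟙`.
The change of variables `y ↦ (√π_i y_i)_i` turns `A†A` into a symmetric operator on Euclidean
space leaving `(√π)^⊥` invariant. The maximum of its Rayleigh quotient on that subspace is an
eigenvalue whose eigenvector is `π`-orthogonal to `𝟙`, and it bounds every such eigenvalue, so it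
is `λ₂(A†A)`. Hence `V(t) ≤ β V(t-1)`; since `‖y‖²_∞ ≤ (Σ 1/π_i) V`, the sup-distance of `x(t)`
to `x̄ 𝟙` is `O(√β ^ t)`.
-/

open Finset Matrix Filter

/-- The `π`-adjoint of `A`: `(A†)_{ij} = (π_j/π_i) A_{ji}`. -/
noncomputable def piAdj {n : ℕ} (π : Fin n → ℝ) (A : Matrix (Fin n) (Fin n) ℝ) :
    Matrix (Fin n) (Fin n) ℝ :=
  Matrix.of fun i j => π j / π i * A j i

section Rayleigh

variable {E : Type*} [NormedAddCommGroup E] [InnerProductSpace ℝ E] [FiniteDimensional ℝ E]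

theorem LinearMap.IsSymmetric.exists_hasEigenvalue_inner_le [Nontrivial E] {T : E →ₗ[ℝ] E}
    (hT : T.IsSymmetric) :
    ∃ μ, Module.End.HasEigenvalue T μ ∧ ∀ z, inner ℝ (T z) z ≤ μ * ‖z‖ ^ 2 := by
  refine ⟨_, hT.hasEigenvalue_iSup_of_finiteDimensional, fun z => ?_⟩
  rcases eq_or_ne z 0 with rfl | hz
  · simp
  have hbdd : BddAbove (Set.range fun x : {x : E // x ≠ 0} =>
      RCLike.re (inner ℝ (T x) (x : E)) / ‖(x : E)‖ ^ 2) := by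
    refine ⟨‖LinearMap.toContinuousLinearMap T‖, ?_⟩
    rintro _ ⟨x, rfl⟩
    exact (le_abs_self _).trans ((LinearMap.toContinuousLinearMap T).rayleighQuotient_le_norm x)
  have := le_ciSup hbdd ⟨z, hz⟩
  rwa [RCLike.re_to_real, div_le_iff₀ (by positivity)] at this

theorem LinearMap.IsSymmetric.exists_eigenvector_mem_inner_le {T : E →ₗ[ℝ] E}
    (hT : T.IsSymmetric) {W : Submodule ℝ E} (hW : ∀ z ∈ W, T z ∈ W) (hne : W ≠ ⊥) :
    ∃ μ, ∃ u ∈ W, u ≠ 0 ∧ T u = μ • u ∧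
      ∀ z ∈ W, inner ℝ (T z) z ≤ μ * ‖z‖ ^ 2 := by
  have : Nontrivial W := Submodule.nontrivial_iff_ne_bot.mpr hne
  obtain ⟨μ, hμ, hle⟩ := (hT.restrict_invariant hW).exists_hasEigenvalue_inner_le
  obtain ⟨u, hu⟩ := hμ.exists_hasEigenvector
  refine ⟨μ, u, u.2, by simpa using hu.2, congrArg Subtype.val hu.apply_eq_smul,
    fun z hz => hle ⟨z, hz⟩⟩

end Rayleigh

def piInner {n : ℕ} (π : Fin n → ℝ) (a b : Fin n → ℝ) : ℝ := ∑ i, π i * a i * b i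

section Weighted

variable {n : ℕ} {π : Fin n → ℝ}

theorem piInner_comm (a b : Fin n → ℝ) : piInner π a b = piInner π b a := by
  simp only [piInner, mul_right_comm]

theorem piInner_one_left (b : Fin n → ℝ) : piInner π 1 b = ∑ i, π i * b i := by
  simp [piInner]

theorem piInner_smul_right (a b : Fin n → ℝ) (c : ℝ) :
    piInner π a (c • b) = c * piInner π a b := by
  simp only [piInner, Pi.smul_apply, smul_eq_mul, Finset.mul_sum]
  exact Finset.sum_congr rfl fun i _ => by ring

theorem piInner_self (a : Fin n → ℝ) : piInner π a a = ∑ i, π i * a i ^ 2 := by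
  simp only [piInner, sq, mul_assoc]

theorem piInner_self_nonneg (hπ : ∀ i, 0 ≤ π i) (a : Fin n → ℝ) :
    0 ≤ piInner π a a := by
  rw [piInner_self]
  exact Finset.sum_nonneg fun i _ => mul_nonneg (hπ i) (sq_nonneg _)

theorem piInner_self_pos (hπ : ∀ i, 0 < π i) {a : Fin n → ℝ} (ha : a ≠ 0) :
    0 < piInner π a a := by
  obtain ⟨i, hi⟩ := Function.ne_iff.mp ha
  rw [piInner_self]
  exact Finset.sum_pos' (fun j _ => mul_nonneg (hπ j).le (sq_nonneg _))
    ⟨i, Finset.mem_univ i, mul_pos (hπ i) (sq_pos_of_ne_zero hi)⟩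

noncomputable def sqrtWeight (hπ : ∀ i, 0 < π i) :
    (Fin n → ℝ) ≃ₗ[ℝ] EuclideanSpace ℝ (Fin n) :=
  (LinearEquiv.piCongrRight fun i => LinearEquiv.smulOfNeZero ℝ ℝ (√(π i))
    (Real.sqrt_ne_zero'.mpr (hπ i))).trans (WithLp.linearEquiv 2 ℝ (Fin n → ℝ)).symm

theorem sqrtWeight_apply (hπ : ∀ i, 0 < π i) (a : Fin n → ℝ) (i : Fin n) :
    sqrtWeight hπ a i = √(π i) * a i :=
  rfl

theorem inner_sqrtWeight (hπ : ∀ i, 0 < π i) (a b : Fin n → ℝ) :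
    inner ℝ (sqrtWeight hπ a) (sqrtWeight hπ b) = piInner π a b := by
  simp only [PiLp.inner_apply, sqrtWeight_apply, RCLike.inner_apply, conj_trivial, piInner]
  refine Finset.sum_congr rfl fun i _ => ?_
  linear_combination a i * b i * Real.mul_self_sqrt (hπ i).le

theorem exists_eigenvector_piInner_le (hπ : ∀ i, 0 < π i) {M : Matrix (Fin n) (Fin n) ℝ}
    (hM : ∀ a b, piInner π (M *ᵥ a) b = piInner π a (M *ᵥ b)) (hM1 : M *ᵥ 1 = 1)
    {y : Fin n → ℝ} (hy0 : y ≠ 0) (hy : ∑ i, π i * y i = 0) :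
    ∃ μ, (∃ v ≠ 0, ∑ i, π i * v i = 0 ∧ M *ᵥ v = μ • v) ∧
      ∀ a, ∑ i, π i * a i = 0 → piInner π a (M *ᵥ a) ≤ μ * piInner π a a := by
  set φ := sqrtWeight hπ
  set T := φ.conj M.mulVecLin
  have hTφ : ∀ a, T (φ a) = φ (M *ᵥ a) := fun a => by simp [T, LinearEquiv.conj_apply]
  have hT : T.IsSymmetric := by
    intro u v
    obtain ⟨a, rfl⟩ := φ.surjective u
    obtain ⟨b, rfl⟩ := φ.surjective v
    rw [hTφ, hTφ, inner_sqrtWeight, inner_sqrtWeight, hM]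
  set W := (ℝ ∙ φ 1)ᗮ
  have hmemW : ∀ a, φ a ∈ W ↔ ∑ i, π i * a i = 0 := fun a => by
    rw [Submodule.mem_orthogonal_singleton_iff_inner_right, inner_sqrtWeight, piInner_one_left]
  have hWinv : ∀ z ∈ W, T z ∈ W := by
    intro z hz
    obtain ⟨a, rfl⟩ := φ.surjective z
    rw [hTφ, hmemW, ← piInner_one_left, ← hM, hM1, piInner_one_left, ← hmemW]
    exact hz
  have hWne : W ≠ ⊥ := fun h =>
    hy0 (φ.map_eq_zero_iff.mp ((Submodule.mem_bot ℝ).mp (h ▸ (hmemW y).mpr hy)))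
  obtain ⟨μ, u, huW, hu0, hTu, hle⟩ := hT.exists_eigenvector_mem_inner_le hWinv hWne
  obtain ⟨v, rfl⟩ := φ.surjective u
  refine ⟨μ, ⟨v, fun h => hu0 (by simp [h]), (hmemW v).mp huW,
    φ.injective (by rw [← hTφ, hTu, map_smul])⟩, fun a ha => ?_⟩
  have := hle (φ a) ((hmemW a).mpr ha)
  rwa [hTφ, inner_sqrtWeight, piInner_comm, ← real_inner_self_eq_norm_sq,
    inner_sqrtWeight] at this

theorem piInner_mulVec_le_lambda2_mul (hπ : ∀ i, 0 < π i) {M : Matrix (Fin n) (Fin n) ℝ}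
    (hM : ∀ a b, piInner π (M *ᵥ a) b = piInner π a (M *ᵥ b)) (hM1 : M *ᵥ 1 = 1)
    {y : Fin n → ℝ} (hy : ∑ i, π i * y i = 0) :
    piInner π y (M *ᵥ y) ≤ lambda2 π M * piInner π y y := by
  rcases eq_or_ne y 0 with rfl | hy0
  · simp [piInner]
  obtain ⟨μ, ⟨v, hv0, hv, hMv⟩, hle⟩ := exists_eigenvector_piInner_le hπ hM hM1 hy0 hy
  have hgreatest : IsGreatest {l | ∃ x : Fin n → ℝ, x ≠ 0 ∧ (∑ i, π i * x i) = 0 ∧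
      M *ᵥ x = l • x} μ := by
    refine ⟨⟨v, hv0, hv, hMv⟩, ?_⟩
    rintro l ⟨x, hx0, hx, hMx⟩
    have := hle x hx
    rw [hMx, piInner_smul_right] at this
    exact le_of_mul_le_mul_right this (piInner_self_pos hπ hx0)
  rw [lambda2, hgreatest.csSup_eq]
  exact hle y hy

theorem mulVec_const_of_sum_eq_one {A : Matrix (Fin n) (Fin n) ℝ} (hrow : ∀ i, ∑ j, A i j = 1)
    (c : ℝ) : A *ᵥ (fun _ => c) = fun _ => c := by
  funext i
  simp [mulVec, dotProduct, ← Finset.sum_mul, hrow]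

theorem sum_mul_mulVec_of_perron {A : Matrix (Fin n) (Fin n) ℝ}
    (hperron : ∀ j, ∑ i, π i * A i j = π j) (y : Fin n → ℝ) :
    ∑ i, π i * (A *ᵥ y) i = ∑ i, π i * y i := by
  simp only [mulVec, dotProduct, Finset.mul_sum]
  rw [Finset.sum_comm]
  refine Finset.sum_congr rfl fun j _ => ?_
  simp only [← mul_assoc, ← Finset.sum_mul, hperron]

theorem piInner_piAdj_mulVec (hπ : ∀ i, π i ≠ 0) (A : Matrix (Fin n) (Fin n) ℝ)
    (a b : Fin n → ℝ) : piInner π (piAdj π A *ᵥ a) b = piInner π a (A *ᵥ b) := by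
  simp only [piInner, piAdj, mulVec, dotProduct, of_apply, Finset.mul_sum, Finset.sum_mul]
  rw [Finset.sum_comm]
  refine Finset.sum_congr rfl fun j _ => Finset.sum_congr rfl fun i _ => ?_
  field_simp [hπ i]

theorem piAdj_mulVec_one (hπ : ∀ i, π i ≠ 0) {A : Matrix (Fin n) (Fin n) ℝ}
    (hperron : ∀ j, ∑ i, π i * A i j = π j) : piAdj π A *ᵥ 1 = 1 := by
  funext i
  simp only [piAdj, mulVec, dotProduct, of_apply, Pi.one_apply, mul_one, div_mul_eq_mul_div,
    ← Finset.sum_div, hperron, div_self (hπ i)]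

theorem piInner_piAdj_mul_self_mulVec (hπ : ∀ i, π i ≠ 0) (A : Matrix (Fin n) (Fin n) ℝ)
    (a b : Fin n → ℝ) :
    piInner π ((piAdj π A * A) *ᵥ a) b = piInner π (A *ᵥ a) (A *ᵥ b) := by
  rw [← mulVec_mulVec, piInner_piAdj_mulVec hπ]

theorem lambda2_piAdj_mul_self_nonneg (hπ : ∀ i, 0 < π i) (A : Matrix (Fin n) (Fin n) ℝ) :
    0 ≤ lambda2 π (piAdj π A * A) := by
  refine Real.sSup_nonneg fun l ⟨x, hx0, _, hMx⟩ => ?_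
  have h := piInner_self_nonneg (fun i => (hπ i).le) (A *ᵥ x)
  rw [← piInner_piAdj_mul_self_mulVec (fun i => (hπ i).ne'), piInner_comm, hMx,
    piInner_smul_right] at h
  exact nonneg_of_mul_nonneg_left h (piInner_self_pos hπ hx0)

theorem piInner_mulVec_self_le_lambda2_mul (hπ : ∀ i, 0 < π i) {A : Matrix (Fin n) (Fin n) ℝ}
    (hrow : ∀ i, ∑ j, A i j = 1) (hperron : ∀ j, ∑ i, π i * A i j = π j)
    {y : Fin n → ℝ} (hy : ∑ i, π i * y i = 0) :
    piInner π (A *ᵥ y) (A *ᵥ y) ≤ lambda2 π (piAdj π A * A) * piInner π y y := by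
  have hπ0 : ∀ i, π i ≠ 0 := fun i => (hπ i).ne'
  rw [← piInner_piAdj_mul_self_mulVec hπ0, piInner_comm]
  refine piInner_mulVec_le_lambda2_mul hπ (fun a b => ?_) ?_ hy
  · rw [piInner_comm a, piInner_piAdj_mul_self_mulVec hπ0, piInner_piAdj_mul_self_mulVec hπ0,
      piInner_comm]
  · have hA1 : A *ᵥ 1 = 1 := mulVec_const_of_sum_eq_one hrow 1
    rw [← mulVec_mulVec, hA1, piAdj_mulVec_one hπ0 hperron]

theorem piInner_le_pow_mul (hπ : ∀ i, 0 < π i) {A : ℕ → Matrix (Fin n) (Fin n) ℝ}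
    (hrow : ∀ t, 1 ≤ t → ∀ i, ∑ j, A t i j = 1)
    (hperron : ∀ t, 1 ≤ t → ∀ j, ∑ i, π i * A t i j = π j) {β : ℝ}
    (hβ : ∀ t, 1 ≤ t → lambda2 π (piAdj π (A t) * A t) ≤ β) {y : ℕ → Fin n → ℝ}
    (hy : ∀ t, y (t + 1) = A (t + 1) *ᵥ y t) (hy0 : ∑ i, π i * y 0 i = 0) (t : ℕ) :
    piInner π (y t) (y t) ≤ β ^ t * piInner π (y 0) (y 0) := by
  have hmean : ∀ t, ∑ i, π i * y t i = 0 := by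
    intro t
    induction t with
    | zero => exact hy0
    | succ t ih => rw [hy, sum_mul_mulVec_of_perron (hperron _ le_add_self), ih]
  have hβ0 : 0 ≤ β := (lambda2_piAdj_mul_self_nonneg hπ (A 1)).trans (hβ 1 le_rfl)
  induction t with
  | zero => simp
  | succ t ih =>
    calc piInner π (y (t + 1)) (y (t + 1))
        ≤ lambda2 π (piAdj π (A (t + 1)) * A (t + 1)) * piInner π (y t) (y t) := by
          rw [hy]
          exact piInner_mulVec_self_le_lambda2_mul hπ (hrow _ le_add_self)
            (hperron _ le_add_self) (hmean t)
      _ ≤ β * (β ^ t * piInner π (y 0) (y 0)) := by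
          gcongr
          exacts [piInner_self_nonneg (fun i => (hπ i).le) _, hβ _ le_add_self]
      _ = β ^ (t + 1) * piInner π (y 0) (y 0) := by ring

theorem norm_le_sqrt_mul_piInner (hπ : ∀ i, 0 < π i) (y : Fin n → ℝ) :
    ‖y‖ ≤ √((∑ i, (π i)⁻¹) * piInner π y y) := by
  refine (pi_norm_le_iff_of_nonneg (Real.sqrt_nonneg _)).mpr fun i => ?_
  rw [Real.norm_eq_abs]
  refine Real.abs_le_sqrt ?_
  have hπi := hπ i
  calc y i ^ 2 = (π i)⁻¹ * (π i * y i ^ 2) := by field_simp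
    _ ≤ (π i)⁻¹ * piInner π y y := by
        rw [piInner_self]
        gcongr
        exact Finset.single_le_sum (f := fun j => π j * y j ^ 2)
          (fun j _ => mul_nonneg (hπ j).le (sq_nonneg _)) (Finset.mem_univ i)
    _ ≤ (∑ i, (π i)⁻¹) * piInner π y y := by
        gcongr
        · exact piInner_self_nonneg (fun i => (hπ i).le) y
        · exact Finset.single_le_sum (f := fun j => (π j)⁻¹)
            (fun j _ => (inv_pos.mpr (hπ j)).le) (Finset.mem_univ i)

theorem norm_le_sqrt_mul_sqrt_pow (hπ : ∀ i, 0 < π i) {β V : ℝ} (hβ : 0 ≤ β) {t : ℕ}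
    {y : Fin n → ℝ} (hy : piInner π y y ≤ β ^ t * V) :
    ‖y‖ ≤ √((∑ i, (π i)⁻¹) * V) * √β ^ t := calc
  ‖y‖ ≤ √((∑ i, (π i)⁻¹) * piInner π y y) := norm_le_sqrt_mul_piInner hπ y
  _ ≤ √((∑ i, (π i)⁻¹) * ((√β ^ t) ^ 2 * V)) := by
      rw [← pow_mul, mul_comm t, pow_mul, Real.sq_sqrt hβ]
      gcongr
      exact Finset.sum_nonneg fun i _ => (inv_pos.mpr (hπ i)).le
  _ = √((∑ i, (π i)⁻¹) * V) * √β ^ t := by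
      rw [mul_left_comm, Real.sqrt_mul (sq_nonneg _), Real.sqrt_sq (by positivity), mul_comm]

end Weighted

theorem tendsto_of_dist_le_mul_pow {X : Type*} [PseudoMetricSpace X] {u : ℕ → X} {a : X}
    {C r : ℝ} (hr0 : 0 ≤ r) (hr1 : r < 1) (h : ∀ t, dist (u t) a ≤ C * r ^ t) :
    Tendsto u atTop (nhds a) := by
  refine tendsto_iff_dist_tendsto_zero.mpr (squeeze_zero (fun t => dist_nonneg) h ?_)
  simpa using (tendsto_pow_atTop_nhds_zero_of_lt_one hr0 hr1).const_mul C

theorem limsup_rpow_one_div_le_of_le_mul_pow {f : ℕ → ℝ} {C r : ℝ} (hf : ∀ t, 0 ≤ f t)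
    (hr : 0 ≤ r) (h : ∀ t, f t ≤ C * r ^ t) :
    limsup (fun t : ℕ => f t ^ ((1 : ℝ) / t)) atTop ≤ r := by
  set D := max C 1
  have hD : 0 < D := lt_max_of_lt_right one_pos
  have hbound : ∀ᶠ t : ℕ in atTop, f t ^ ((1 : ℝ) / t) ≤ D ^ ((1 : ℝ) / t) * r := by
    filter_upwards [eventually_ge_atTop 1] with t ht
    calc f t ^ ((1 : ℝ) / t) ≤ (D * r ^ t) ^ ((1 : ℝ) / t) :=
          Real.rpow_le_rpow (hf t) ((h t).trans (by gcongr; exact le_max_left C 1))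
            (by positivity)
      _ = D ^ ((1 : ℝ) / t) * r := by
          rw [Real.mul_rpow hD.le (by positivity), ← Real.rpow_natCast,
            ← Real.rpow_mul hr, mul_one_div_cancel (by positivity), Real.rpow_one]
  have hlim : Tendsto (fun t : ℕ => D ^ ((1 : ℝ) / t) * r) atTop (nhds r) := by
    simpa using ((tendsto_const_nhds (x := D)).rpow tendsto_one_div_atTop_nhds_zero_nat
      (Or.inl hD.ne')).mul_const r
  calc limsup (fun t : ℕ => f t ^ ((1 : ℝ) / t)) atTop
      ≤ limsup (fun t : ℕ => D ^ ((1 : ℝ) / t) * r) atTop :=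
        limsup_le_limsup hbound (isCoboundedUnder_le_of_le atTop fun t =>
          Real.rpow_nonneg (hf t) _) hlim.isBoundedUnder_le
    _ = r := hlim.limsup_eq

theorem averaging_convergence_rate_general {n : ℕ}
    (π : Fin n → ℝ) (A : ℕ → Matrix (Fin n) (Fin n) ℝ)
    (hπpos : ∀ i, 0 < π i) (hπsum : ∑ i, π i = 1)
    (hstoch : ∀ t, 1 ≤ t → IsStochastic (A t))
    (hperron : ∀ t, 1 ≤ t → ∀ j, ∑ i, π i * A t i j = π j)
    (x : ℕ → Fin n → ℝ)
    (hx : ∀ t, x (t + 1) = (A (t + 1)).mulVec (x t))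
    (β : ℝ) (hβ1 : β < 1)
    (hβ : ∀ t, 1 ≤ t → lambda2 π (piAdj π (A t) * A t) ≤ β) :
    (∀ t, ∑ i, π i * (x t i - (∑ j, π j * x 0 j)) ^ 2
        ≤ β ^ t * ∑ i, π i * (x 0 i - (∑ j, π j * x 0 j)) ^ 2) ∧
    Tendsto x atTop (nhds (fun _ => ∑ j, π j * x 0 j)) ∧
    limsup (fun t : ℕ => dist (x t) (fun _ => ∑ j, π j * x 0 j) ^ ((1 : ℝ) / t)) atTop
      ≤ Real.sqrt β := by
  set c := ∑ j, π j * x 0 j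
  set y : ℕ → Fin n → ℝ := fun t => x t - fun _ => c
  have hrow : ∀ t, 1 ≤ t → ∀ i, ∑ j, A t i j = 1 := fun t ht => (hstoch t ht).2
  have hy : ∀ t, y (t + 1) = A (t + 1) *ᵥ y t := fun t => by
    simp only [y, hx, mulVec_sub, mulVec_const_of_sum_eq_one (hrow _ le_add_self)]
  have hy0 : ∑ i, π i * y 0 i = 0 := by
    simp [y, c, mul_sub, Finset.sum_sub_distrib, ← Finset.sum_mul, hπsum]
  have hV := piInner_le_pow_mul hπpos hrow hperron hβ hy hy0
  have hβ0 : 0 ≤ β := (lambda2_piAdj_mul_self_nonneg hπpos (A 1)).trans (hβ 1 le_rfl)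
  have hdist : ∀ t, dist (x t) (fun _ => c)
      ≤ √((∑ i, (π i)⁻¹) * piInner π (y 0) (y 0)) * √β ^ t := fun t => by
    rw [dist_eq_norm]
    exact norm_le_sqrt_mul_sqrt_pow hπpos hβ0 (hV t)
  have hsqrtβ : √β < 1 := (Real.sqrt_lt' one_pos).mpr (by rwa [one_pow])
  refine ⟨fun t => by simpa only [piInner_self, y, Pi.sub_apply] using hV t,
    tendsto_of_dist_le_mul_pow (Real.sqrt_nonneg β) hsqrtβ hdist,
    limsup_rpow_one_div_le_of_le_mul_pow (fun t => dist_nonneg) (Real.sqrt_nonneg β) hdist⟩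

theorem averaging_convergence_rate {n : ℕ} (hn : 2 ≤ n)
    (π : Fin n → ℝ) (A : ℕ → Matrix (Fin n) (Fin n) ℝ)
    (hπpos : ∀ i, 0 < π i) (hπsum : ∑ i, π i = 1)
    (hstoch : ∀ t, 1 ≤ t → IsStochastic (A t))
    (hirr : ∀ t, 1 ≤ t → IsIrreducibleM (A t))
    (hdiag : ∀ t, 1 ≤ t → ∀ i, 0 < A t i i)
    (hperron : ∀ t, 1 ≤ t → ∀ j, ∑ i, π i * A t i j = π j)
    (x : ℕ → Fin n → ℝ)
    (hx : ∀ t, x (t + 1) = (A (t + 1)).mulVec (x t))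
    (β : ℝ) (hβ1 : β < 1)
    (hβ : ∀ t, 1 ≤ t → lambda2 π (piAdj π (A t) * A t) ≤ β) :
    (∀ t, ∑ i, π i * (x t i - (∑ j, π j * x 0 j)) ^ 2
        ≤ β ^ t * ∑ i, π i * (x 0 i - (∑ j, π j * x 0 j)) ^ 2) ∧
    Tendsto x atTop (nhds (fun _ => ∑ j, π j * x 0 j)) ∧
    limsup (fun t : ℕ => dist (x t) (fun _ => ∑ j, π j * x 0 j) ^ ((1 : ℝ) / t)) atTop
      ≤ Real.sqrt β :=
  averaging_convergence_rate_general π A hπpos hπsum hstoch hperron x hx β hβ1 hβ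
end

section
/- Let G be a bidirectional (symmetric) graph on n nodes with a self-loop at each node, and let i_1, …, i_{ℓ+1} be a geodesic (shortest path) in G. Then Σ_{k=1}^{ℓ} max(d_{i_k}, d_{i_{k+1}}) ≤ 4n, where d_v is the degree (number of in-neighbors, including the self-loop) of node v. -/
open Finset

theorem geodesic_degree_sum_le {n : ℕ} (E : Fin n → Fin n → Prop) [DecidableRel E]
    (hsymm : ∀ i j, E i j → E j i) (hrefl : ∀ i, E i i)
    (ℓ : ℕ) (p : Fin (ℓ + 1) → Fin n)
    (hwalk : ∀ k : Fin ℓ, E (p k.castSucc) (p k.succ))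
    (hgeo : ∀ (m : ℕ) (q : Fin (m + 1) → Fin n), q 0 = p 0 →
      q (Fin.last m) = p (Fin.last ℓ) →
      (∀ k : Fin m, E (q k.castSucc) (q k.succ)) → ℓ ≤ m) :
    ∑ k : Fin ℓ,
        max ((Finset.univ.filter (fun u => E u (p k.castSucc))).card)
            ((Finset.univ.filter (fun u => E u (p k.succ))).card)
      ≤ 4 * n := by
  classical
  set N : Fin (ℓ+1) → Finset (Fin n) := fun v => Finset.univ.filter (fun u => E u (p v)) with hN
  have hstep : ∀ (i : ℕ) (h : i < ℓ), E (p ⟨i, by omega⟩) (p ⟨i+1, by omega⟩) :=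
    fun i h => hwalk ⟨i, h⟩
  have key : ∀ a b : Fin (ℓ+1), (a:ℕ) + 3 ≤ (b:ℕ) → Disjoint (N a) (N b) := by
    intro a b hab
    rw [Finset.disjoint_left]
    intro u hua hub
    simp only [hN, mem_filter, mem_univ, true_and] at hua hub
    have ha : (a:ℕ) ≤ ℓ := by omega
    have hb : (b:ℕ) ≤ ℓ := by omega
    set m : ℕ := (a:ℕ) + 2 + (ℓ - (b:ℕ)) with hm
    set q : Fin (m+1) → Fin n := fun j =>
      if h1 : (j:ℕ) ≤ (a:ℕ) then p ⟨j, by omega⟩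
      else if (j:ℕ) = (a:ℕ)+1 then u
      else p ⟨(b:ℕ) + j - ((a:ℕ)+2), by have := j.isLt; omega⟩ with hq
    have hq0 : q 0 = p 0 := by
      simp only [hq]
      rw [dif_pos (by simp)]
      congr 1
    have hqlast : q (Fin.last m) = p (Fin.last ℓ) := by
      simp only [hq]
      rw [dif_neg (by simp [Fin.val_last]; omega), if_neg (by simp [Fin.val_last]; omega)]
      congr 1
      apply Fin.ext
      simp [Fin.val_last]
      omega
    have hqe : ∀ k : Fin m, E (q k.castSucc) (q k.succ) := by
      intro k
      have hk := k.isLt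
      simp only [hq, Fin.coe_castSucc, Fin.val_succ]
      by_cases h1 : (k:ℕ) + 1 ≤ (a:ℕ)
      · rw [dif_pos (by omega), dif_pos h1]
        exact hstep k (by omega)
      · by_cases h2 : (k:ℕ) ≤ (a:ℕ)
        · rw [dif_pos h2, dif_neg (by omega), if_pos (by omega)]
          have : (⟨(k:ℕ), by omega⟩ : Fin (ℓ+1)) = a := Fin.ext (by simp; omega)
          rw [this]
          exact hsymm _ _ hua
        · by_cases h3 : (k:ℕ) = (a:ℕ) + 1
          · rw [dif_neg h2, if_pos h3, dif_neg (by omega), if_neg (by omega)]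
            have : (⟨(b:ℕ) + ((k:ℕ)+1) - ((a:ℕ)+2), by omega⟩ : Fin (ℓ+1)) = b :=
              Fin.ext (by simp; omega)
            rw [this]
            exact hub
          · rw [dif_neg h2, if_neg h3, dif_neg (by omega), if_neg (by omega)]
            have hlt : (b:ℕ) + (k:ℕ) - ((a:ℕ)+2) < ℓ := by omega
            have heq : (⟨(b:ℕ) + ((k:ℕ)+1) - ((a:ℕ)+2), by omega⟩ : Fin (ℓ+1)) =
                ⟨((b:ℕ) + (k:ℕ) - ((a:ℕ)+2)) + 1, by omega⟩ := Fin.ext (by simp; omega)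
            rw [heq]
            exact hstep _ hlt
    have := hgeo m q hq0 hqlast hqe
    omega
  set S : Fin ℓ → Finset (Fin n) := fun k => N k.castSucc ∪ N k.succ with hS
  have hdisjS : ∀ x y : Fin ℓ, (x:ℕ) + 4 ≤ (y:ℕ) → Disjoint (S x) (S y) := by
    intro x y hxy
    simp only [hS]
    rw [Finset.disjoint_union_left]
    constructor <;> (rw [Finset.disjoint_union_right]; constructor) <;>
      (apply key; simp; omega)
  calc ∑ k : Fin ℓ,
        max ((Finset.univ.filter (fun u => E u (p k.castSucc))).card)
            ((Finset.univ.filter (fun u => E u (p k.succ))).card)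
      ≤ ∑ k : Fin ℓ, (S k).card := by
        apply Finset.sum_le_sum
        intro k _
        exact max_le (Finset.card_le_card Finset.subset_union_left)
          (Finset.card_le_card Finset.subset_union_right)
    _ = ∑ r ∈ Finset.range 4, ∑ k ∈ Finset.univ.filter (fun k : Fin ℓ => (k:ℕ) % 4 = r),
          (S k).card := by
        rw [Finset.sum_fiberwise_of_maps_to]
        intro k _
        simp [Nat.mod_lt]
    _ ≤ ∑ r ∈ Finset.range 4, n := by
        apply Finset.sum_le_sum
        intro r _
        have hpd : ∀ x ∈ Finset.univ.filter (fun k : Fin ℓ => (k:ℕ) % 4 = r),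
            ∀ y ∈ Finset.univ.filter (fun k : Fin ℓ => (k:ℕ) % 4 = r),
            x ≠ y → Disjoint (S x) (S y) := by
          intro x hx y hy hne
          simp only [mem_filter, mem_univ, true_and] at hx hy
          have hne' : (x:ℕ) ≠ (y:ℕ) := fun h => hne (Fin.ext h)
          rcases Nat.lt_or_ge (x:ℕ) (y:ℕ) with h | h
          · exact hdisjS x y (by omega)
          · exact (hdisjS y x (by omega)).symm
        rw [← Finset.card_biUnion hpd]
        exact le_trans (Finset.card_le_univ _) (by simp)
    _ = 4 * n := by simp [mul_comm]
end
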